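/- arXiv:2008.09538 — 8 statements merged into one kernel-verified Lean document; each statement's English description precedes it below -/
import Mathlib

section
/- For every smooth (C^∞) compactly supported function f : ℝ³ → ℝ whose support is contained in the open half-space {x ∈ ℝ³ : x₁ > 0}, one has ∫_{ℝ³} f(x)²/‖x‖² dx ≤ (4/9) · ∫_{ℝ³} ‖∇f(x)‖² dx, where ∇f denotes the gradient of f and ‖·‖ the Euclidean norm. -/
set_option maxHeartbeats 1000000
open MeasureTheory Set
open scoped RealInnerProductSpace InnerProductSpace

local notation "E3" => EuclideanSpace ℝ (Fin 3)


theorem div_int_zero_pi {n : ℕ} {F : (Fin (n+1) → ℝ) → (Fin (n+1) → ℝ)}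
    {F' : (Fin (n+1) → ℝ) → (Fin (n+1) → ℝ) →L[ℝ] (Fin (n+1) → ℝ)}
    (hd : ∀ x, HasFDerivAt F (F' x) x) (hc : HasCompactSupport F)
    (hi : Integrable (fun x => ∑ i, F' x (Pi.single i 1) i)) :
    ∫ x, ∑ i, F' x (Pi.single i 1) i = 0 := by
  obtain ⟨R, hR⟩ : ∃ R : ℝ, tsupport F ⊆ Metric.closedBall 0 R :=
    hc.isCompact.isBounded.subset_closedBall 0
  set a : Fin (n+1) → ℝ := fun _ => -(|R|+1) with ha
  set b : Fin (n+1) → ℝ := fun _ => (|R|+1) with hb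
  have habs : (0:ℝ) ≤ |R| := abs_nonneg R
  have hle : a ≤ b := fun i => by simp only [ha, hb]; linarith
  have key := MeasureTheory.integral_divergence_of_hasFDerivAt_off_countable a b hle F F'
    ∅ countable_empty (fun x _ => (hd x).continuousAt.continuousWithinAt)
    (fun x _ => hd x) hi.integrableOn
  have hface : ∀ (i : Fin (n+1)) (c : ℝ), |c| = |R| + 1 → ∀ x : Fin n → ℝ,
      F (i.insertNth c x) i = 0 := by
    intro i c hcabs x
    have hout : (i.insertNth c x : Fin (n+1) → ℝ) ∉ tsupport F := by
      intro hmem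
      have h2 := hR hmem
      rw [Metric.mem_closedBall, dist_zero_right] at h2
      have h1 : |c| ≤ ‖(i.insertNth c x : Fin (n+1) → ℝ)‖ := by
        have h3 := norm_le_pi_norm (i.insertNth c x : Fin (n+1) → ℝ) i
        simpa using h3
      have h4 : R ≤ |R| := le_abs_self R
      rw [hcabs] at h1
      linarith
    simp [image_eq_zero_of_notMem_tsupport hout]
  have hz : ∀ i : Fin (n+1),
      ((∫ x in Icc (a ∘ i.succAbove) (b ∘ i.succAbove), F (i.insertNth (b i) x) i) -
        ∫ x in Icc (a ∘ i.succAbove) (b ∘ i.succAbove), F (i.insertNth (a i) x) i) = 0 := by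
    intro i
    have e1 : ∀ x : Fin n → ℝ, F (i.insertNth (b i) x) i = 0 :=
      fun x => hface i (b i) (by show |(|R| + 1)| = |R| + 1; rw [abs_of_nonneg (by linarith)]) x
    have e2 : ∀ x : Fin n → ℝ, F (i.insertNth (a i) x) i = 0 :=
      fun x => hface i (a i) (by show |(-(|R| + 1))| = |R| + 1; rw [abs_of_nonpos (by linarith)]; ring) x
    simp only [e1, e2, integral_zero, sub_zero]
  rw [Finset.sum_eq_zero (fun i _ => hz i)] at key
  -- now extend from Icc to univ
  have hzero : ∀ x, x ∉ Icc a b → (∑ i, F' x (Pi.single i 1) i) = 0 := by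
    intro x hx
    have hxt : x ∉ tsupport F := by
      intro hmem
      have h2 := hR hmem
      rw [Metric.mem_closedBall, dist_zero_right] at h2
      refine hx (mem_Icc.mpr ⟨fun i => ?_, fun i => ?_⟩)
      · have h3 := norm_le_pi_norm x i
        have h4 : |x i| ≤ ‖x‖ := by simpa using h3
        have h5 : R ≤ |R| := le_abs_self R
        simp only [ha]
        have := abs_le.mp (le_trans h4 h2 |>.trans h5 : |x i| ≤ |R|)
        linarith [this.1]
      · have h3 := norm_le_pi_norm x i
        have h4 : |x i| ≤ ‖x‖ := by simpa using h3
        have h5 : R ≤ |R| := le_abs_self R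
        simp only [hb]
        have := abs_le.mp (le_trans h4 h2 |>.trans h5 : |x i| ≤ |R|)
        linarith [this.2]
    have hF0 : F' x = 0 := by
      have hev : F =ᶠ[nhds x] (fun _ => (0 : Fin (n+1) → ℝ)) := by
        filter_upwards [(isClosed_tsupport F).isOpen_compl.mem_nhds hxt] with y hy
        exact image_eq_zero_of_notMem_tsupport hy
      have : HasFDerivAt F (0 : (Fin (n+1) → ℝ) →L[ℝ] (Fin (n+1) → ℝ)) x :=
        (hasFDerivAt_const _ _).congr_of_eventuallyEq hev
      exact (hd x).unique this
    simp [hF0]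
  rw [← setIntegral_eq_integral_of_forall_compl_eq_zero (fun x hx => hzero x hx) (s := Icc a b)]
  exact key


theorem div_int_zero_E {F : E3 → E3} {F' : E3 → E3 →L[ℝ] E3}
    (hd : ∀ x, HasFDerivAt F (F' x) x) (hc : HasCompactSupport F)
    (hi : Integrable (fun x => ∑ i, F' x (EuclideanSpace.single i 1) i)) :
    ∫ x : E3, ∑ i, F' x (EuclideanSpace.single i 1) i = 0 := by
  set eqv : E3 ≃L[ℝ] (Fin 3 → ℝ) := EuclideanSpace.equiv (Fin 3) ℝ with heqv
  set G : (Fin 3 → ℝ) → (Fin 3 → ℝ) := fun y => eqv (F (eqv.symm y)) with hG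
  set G' : (Fin 3 → ℝ) → (Fin 3 → ℝ) →L[ℝ] (Fin 3 → ℝ) := fun y =>
    (eqv.toContinuousLinearMap.comp (F' (eqv.symm y))).comp eqv.symm.toContinuousLinearMap with hG'
  have hdG : ∀ y, HasFDerivAt G (G' y) y := fun y =>
    (eqv.toContinuousLinearMap.hasFDerivAt.comp _
      ((hd (eqv.symm y)).comp y eqv.symm.toContinuousLinearMap.hasFDerivAt))
  have hcG : HasCompactSupport G := by
    have h1 : HasCompactSupport (F ∘ eqv.symm.toHomeomorph) :=
      hc.comp_homeomorph eqv.symm.toHomeomorph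
    exact h1.comp_left (map_zero eqv)
  have hsingle : ∀ i : Fin 3, (eqv.symm (Pi.single i 1) : E3) = EuclideanSpace.single i 1 := by
    intro i; rfl
  have hdiv : ∀ y, (∑ i, G' y (Pi.single i 1) i)
      = ∑ i, F' (eqv.symm y) (EuclideanSpace.single i 1) i := by
    intro y
    refine Finset.sum_congr rfl fun i _ => ?_
    simp only [hG', ContinuousLinearMap.coe_comp', Function.comp_apply,
      ContinuousLinearEquiv.coe_coe]
    rw [hsingle]
    rfl
  have hmp : MeasurePreserving ((MeasurableEquiv.toLp 2 (Fin 3 → ℝ)))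
      (volume : Measure (Fin 3 → ℝ)) (volume : Measure E3) :=
    MeasurePreserving.symm _ (EuclideanSpace.volume_preserving_symm_measurableEquiv_toLp (Fin 3))
  have hiG : Integrable (fun y => ∑ i, G' y (Pi.single i 1) i) := by
    simp only [hdiv]
    exact (hmp.integrable_comp_emb
      (MeasurableEquiv.toLp 2 (Fin 3 → ℝ)).measurableEmbedding).mpr hi
  have key := div_int_zero_pi hdG hcG hiG
  have htrans : ∫ y : Fin 3 → ℝ, ∑ i, G' y (Pi.single i 1) i
      = ∫ x : E3, ∑ i, F' x (EuclideanSpace.single i 1) i := by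
    simp only [hdiv]
    exact hmp.integral_comp (MeasurableEquiv.toLp 2 (Fin 3 → ℝ)).measurableEmbedding
      (fun x : E3 => ∑ i, F' x (EuclideanSpace.single i 1) i)
  rw [← htrans]; exact key

noncomputable def proj0 : E3 →L[ℝ] ℝ := EuclideanSpace.proj (0 : Fin 3)
noncomputable def ee (i : Fin 3) : E3 := EuclideanSpace.single i (1:ℝ)
noncomputable def Wv (x : E3) : E3 :=
  (x 0)⁻¹ • ee 0 - ((3/2) * (⟪x, x⟫_ℝ)⁻¹) • x
noncomputable def Wd (x : E3) : E3 →L[ℝ] E3 :=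
  ((-((x 0)^2)⁻¹) • proj0).smulRight (ee 0)
  - (((3/2) * (⟪x, x⟫_ℝ)⁻¹) • ContinuousLinearMap.id ℝ E3
     + ((3/2 : ℝ) • ((-(⟪x, x⟫_ℝ^2)⁻¹) • ((fderivInnerCLM ℝ ((x : E3), (x : E3))).comp
         ((ContinuousLinearMap.id ℝ E3).prod (ContinuousLinearMap.id ℝ E3))))).smulRight x)

lemma inner_pos (x : E3) (hx0 : 0 < x 0) : 0 < ⟪x, x⟫_ℝ := by
  have hxne : x ≠ 0 := by
    intro h
    rw [h] at hx0
    simp at hx0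
  rw [real_inner_self_eq_norm_sq]
  have : 0 < ‖x‖ := norm_pos_iff.mpr hxne
  positivity

lemma Wv_hasFDerivAt (x : E3) (hx0 : 0 < x 0) : HasFDerivAt Wv (Wd x) x := by
  have hQ : ⟪x, x⟫_ℝ ≠ 0 := (inner_pos x hx0).ne'
  have h0 : HasFDerivAt (fun y : E3 => y 0) proj0 x := proj0.hasFDerivAt
  have h1 : HasFDerivAt (fun y : E3 => (y 0)⁻¹)
      ((-((x 0)^2)⁻¹) • proj0) x :=
    (hasDerivAt_inv hx0.ne').comp_hasFDerivAt x h0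
  have h2 : HasFDerivAt (fun y : E3 => (y 0)⁻¹ • ee 0)
      (((-((x 0)^2)⁻¹) • proj0).smulRight (ee 0)) x :=
    h1.smul_const (ee 0)
  have h3 : HasFDerivAt (fun y : E3 => ⟪y, y⟫_ℝ)
      ((fderivInnerCLM ℝ ((x : E3), (x : E3))).comp
        ((ContinuousLinearMap.id ℝ E3).prod (ContinuousLinearMap.id ℝ E3))) x :=
    HasFDerivAt.inner ℝ (hasFDerivAt_id x) (hasFDerivAt_id x)
  have h4 : HasFDerivAt (fun y : E3 => (⟪y, y⟫_ℝ)⁻¹)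
      ((-(⟪x, x⟫_ℝ^2)⁻¹) • ((fderivInnerCLM ℝ ((x : E3), (x : E3))).comp
        ((ContinuousLinearMap.id ℝ E3).prod (ContinuousLinearMap.id ℝ E3)))) x := by
    have h4' := HasDerivAt.comp_hasFDerivAt (f := fun y : E3 => ⟪y, y⟫_ℝ) x
      (hasDerivAt_inv hQ) h3
    exact h4'
  have h5 : HasFDerivAt (fun y : E3 => (3/2) * (⟪y, y⟫_ℝ)⁻¹)
      ((3/2 : ℝ) • ((-(⟪x, x⟫_ℝ^2)⁻¹) • ((fderivInnerCLM ℝ ((x : E3), (x : E3))).comp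
        ((ContinuousLinearMap.id ℝ E3).prod (ContinuousLinearMap.id ℝ E3))))) x :=
    h4.const_mul (3/2)
  have h6 : HasFDerivAt (fun y : E3 => ((3/2) * (⟪y, y⟫_ℝ)⁻¹) • y)
      (((3/2) * (⟪x, x⟫_ℝ)⁻¹) • ContinuousLinearMap.id ℝ E3
        + ((3/2 : ℝ) • ((-(⟪x, x⟫_ℝ^2)⁻¹) • ((fderivInnerCLM ℝ ((x : E3), (x : E3))).comp
            ((ContinuousLinearMap.id ℝ E3).prod (ContinuousLinearMap.id ℝ E3))))).smulRight x) x :=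
    h5.smul (hasFDerivAt_id x)
  exact h2.sub h6

@[simp] lemma proj0_apply (x : E3) : proj0 x = x 0 := rfl
@[simp] lemma ee_apply (i j : Fin 3) : ee i j = if j = i then 1 else 0 := by
  simp [ee, EuclideanSpace.single_apply]

lemma decomp (v : E3) : v = v 0 • ee 0 + v 1 • ee 1 + v 2 • ee 2 := by
  ext j
  fin_cases j <;> simp [ee, EuclideanSpace.single_apply]

lemma sum_coord (T : E3 →L[ℝ] ℝ) (v : E3) : ∑ i, T (ee i) * v i = T v := by
  conv_rhs => rw [decomp v, map_add, map_add, _root_.map_smul, _root_.map_smul, _root_.map_smul]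
  rw [Fin.sum_univ_three]
  simp [mul_comm]

lemma inner_coords (x y : E3) : ⟪x, y⟫_ℝ = x 0 * y 0 + x 1 * y 1 + x 2 * y 2 := by
  simp [PiLp.inner_apply, RCLike.inner_apply, Fin.sum_univ_three, mul_comm]

lemma Wd_div (x : E3) (hx0 : 0 < x 0) :
    ∑ i, (Wd x (ee i)) i = -((x 0)^2)⁻¹ - (3/2) * (⟪x, x⟫_ℝ)⁻¹ := by
  have hQ : 0 < ⟪x, x⟫_ℝ := by
    rw [real_inner_self_eq_norm_sq]
    have hxne : x ≠ 0 := fun h => by rw [h] at hx0; simp at hx0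
    have : 0 < ‖x‖ := norm_pos_iff.mpr hxne
    positivity
  rw [Fin.sum_univ_three]
  simp only [Wd, ContinuousLinearMap.sub_apply, ContinuousLinearMap.add_apply,
    ContinuousLinearMap.smulRight_apply, ContinuousLinearMap.smul_apply,
    ContinuousLinearMap.coe_smul', Pi.smul_apply, ContinuousLinearMap.id_apply,
    ContinuousLinearMap.comp_apply, ContinuousLinearMap.prod_apply, fderivInnerCLM_apply,
    proj0_apply, PiLp.sub_apply, PiLp.add_apply, PiLp.smul_apply, smul_eq_mul, ee_apply]
  simp only [inner_coords, ee_apply, Fin.reduceEq, reduceIte]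
  norm_num
  have h1 : x 0 ≠ 0 := hx0.ne'
  have h2 : (⟪x, x⟫_ℝ) ≠ 0 := hQ.ne'
  rw [inner_coords] at h2
  field_simp
  ring

lemma key_identity (x : E3) (hx0 : 0 < x 0) :
    (-((x 0)^2)⁻¹ - (3/2) * (⟪x, x⟫_ℝ)⁻¹) + ‖Wv x‖^2 = -(9/4) * (⟪x, x⟫_ℝ)⁻¹ := by
  have hQ : 0 < ⟪x, x⟫_ℝ := by
    rw [real_inner_self_eq_norm_sq]
    have hxne : x ≠ 0 := fun h => by rw [h] at hx0; simp at hx0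
    have : 0 < ‖x‖ := norm_pos_iff.mpr hxne
    positivity
  have h1 : x 0 ≠ 0 := hx0.ne'
  have h2 : (⟪x, x⟫_ℝ) ≠ 0 := hQ.ne'
  rw [← real_inner_self_eq_norm_sq]
  rw [inner_coords] at h2 ⊢
  rw [inner_coords (Wv x) (Wv x)]
  simp only [Wv, PiLp.sub_apply, PiLp.smul_apply, smul_eq_mul, ee_apply, Fin.reduceEq,
    reduceIte, inner_coords]
  field_simp
  ring

lemma Fd_deriv (x : E3) (hx0 : 0 < x 0) {g : E3 → ℝ} {Dg : E3 →L[ℝ] ℝ}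
    (hg : HasFDerivAt g Dg x) :
    HasFDerivAt (fun y => g y ^ 2 • Wv y)
      (g x ^ 2 • Wd x + (((2 : ℝ) * g x) • Dg).smulRight (Wv x)) x := by
  have h2 := (hg.mul hg).smul (Wv_hasFDerivAt x hx0)
  have hfun : (fun y => g y ^ 2 • Wv y) = fun y => (g y * g y) • Wv y :=
    funext fun y => by rw [sq]
  have hclm : g x ^ 2 • Wd x + (((2 : ℝ) * g x) • Dg).smulRight (Wv x)
      = (g x * g x) • Wd x + (g x • Dg + g x • Dg).smulRight (Wv x) := by
    ext v i
    simp only [ContinuousLinearMap.add_apply, ContinuousLinearMap.smul_apply,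
      ContinuousLinearMap.smulRight_apply, PiLp.add_apply, PiLp.smul_apply, smul_eq_mul]
    ring
  rw [hfun, hclm]
  exact h2

lemma Fd_divergence (x : E3) (hx0 : 0 < x 0) (c : ℝ) (Dg : E3 →L[ℝ] ℝ) :
    (∑ i, ((c ^ 2 • Wd x + (((2:ℝ) * c) • Dg).smulRight (Wv x)) (ee i)) i)
      = c ^ 2 * (-((x 0)^2)⁻¹ - (3/2) * (⟪x, x⟫_ℝ)⁻¹) + 2 * c * Dg (Wv x) := by
  have expand : ∀ i : Fin 3, ((c ^ 2 • Wd x + (((2:ℝ) * c) • Dg).smulRight (Wv x)) (ee i)) i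
      = c ^ 2 * ((Wd x (ee i)) i) + 2 * c * (Dg (ee i) * (Wv x) i) := by
    intro i
    simp [ContinuousLinearMap.add_apply, ContinuousLinearMap.smul_apply,
      ContinuousLinearMap.smulRight_apply, PiLp.add_apply, PiLp.smul_apply, smul_eq_mul]
    ring
  rw [Finset.sum_congr rfl (fun i _ => expand i), Finset.sum_add_distrib,
    ← Finset.mul_sum, ← Finset.mul_sum, Wd_div x hx0, sum_coord]


/-- Half-space Hardy inequality with constant 4/9 (underlying (II.2.2)): for a smooth,
compactly supported function on `ℝ³` supported in the half-space `{x₁ > 0}`,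
`∫ f(x)²/‖x‖² dx ≤ (4/9) ∫ ‖∇f(x)‖² dx`. -/
theorem hardy_halfspace (f : EuclideanSpace ℝ (Fin 3) → ℝ)
    (hf : ContDiff ℝ (⊤ : ℕ∞) f) (hcomp : HasCompactSupport f)
    (hsupp : tsupport f ⊆ {x : EuclideanSpace ℝ (Fin 3) | 0 < x 0}) :
    ∫ x : EuclideanSpace ℝ (Fin 3), (f x) ^ 2 / ‖x‖ ^ 2
      ≤ (4 / 9) * ∫ x : EuclideanSpace ℝ (Fin 3), ‖gradient f x‖ ^ 2 := by
  have hUopen : IsOpen {x : E3 | 0 < x 0} :=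
    isOpen_lt continuous_const proj0.continuous
  set U : Set E3 := {x : E3 | 0 < x 0} with hUdef
  have hmemU : ∀ x ∈ tsupport f, 0 < x 0 := fun x hx => hsupp hx
  have hgradinner : ∀ (x v : E3), ⟪gradient f x, v⟫_ℝ = fderiv ℝ f x v := by
    intro x v
    rw [gradient]
    exact InnerProductSpace.toDual_symm_apply
  have hfd : ∀ x : E3, HasFDerivAt f (fderiv ℝ f x) x :=
    fun x => (hf.differentiable (by simp) x).hasFDerivAt
  have hf0 : ∀ x, x ∉ tsupport f → f x = 0 := fun x hx => image_eq_zero_of_notMem_tsupport hx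
  have hev0 : ∀ x, x ∉ tsupport f → f =ᶠ[nhds x] (fun _ => (0:ℝ)) := by
    intro x hx
    filter_upwards [(isClosed_tsupport f).isOpen_compl.mem_nhds hx] with y hy
    exact hf0 y hy
  have hDf0 : ∀ x, x ∉ tsupport f → fderiv ℝ f x = 0 := by
    intro x hx
    rw [(hev0 x hx).fderiv_eq]
    exact fderiv_const_apply 0
  have hgrad0 : ∀ x, x ∉ tsupport f → gradient f x = 0 := by
    intro x hx
    rw [gradient, hDf0 x hx, map_zero]
  set F : E3 → E3 := fun x => f x ^ 2 • Wv x with hFdef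
  have hF0 : ∀ x, x ∉ tsupport f → F x = 0 := by
    intro x hx
    simp [hFdef, hf0 x hx]
  have hFev : ∀ x, x ∉ tsupport f → F =ᶠ[nhds x] (fun _ => (0:E3)) := by
    intro x hx
    filter_upwards [(isClosed_tsupport f).isOpen_compl.mem_nhds hx] with y hy
    exact hF0 y hy
  -- smoothness of the pieces
  have hQcd : ContDiff ℝ (⊤ : ℕ∞) (fun x : E3 => ⟪x, x⟫_ℝ) := contDiff_id.inner ℝ contDiff_id
  have hWcd : ContDiffOn ℝ (⊤ : ℕ∞) Wv U := by
    have c1 : ContDiff ℝ (⊤ : ℕ∞) (fun x : E3 => x 0) := proj0.contDiff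
    have p1 : ContDiffOn ℝ (⊤ : ℕ∞) (fun x : E3 => (x 0)⁻¹ • ee 0) U :=
      ((c1.contDiffOn.inv (fun x hx => ne_of_gt hx)).smul contDiffOn_const)
    have p2 : ContDiffOn ℝ (⊤ : ℕ∞) (fun x : E3 => ((3/2) * (⟪x, x⟫_ℝ)⁻¹) • x) U := by
      refine ContDiffOn.smul (ContDiffOn.mul (contDiffOn_const (c := (3/2 : ℝ))) ?_) contDiffOn_id
      exact hQcd.contDiffOn.inv (fun x hx => (inner_pos x hx).ne')
    exact p1.sub p2
  have hFcd : ContDiff ℝ (⊤ : ℕ∞) F := by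
    rw [contDiff_iff_contDiffAt]
    intro x
    by_cases hx : x ∈ U
    · exact (((hf.pow 2).contDiffOn.smul hWcd).contDiffAt (hUopen.mem_nhds hx))
    · have hx' : x ∉ tsupport f := fun h => hx (hsupp h)
      exact (contDiffAt_const (c := (0:E3))).congr_of_eventuallyEq (hFev x hx')
  have hFd : ∀ x, HasFDerivAt F (fderiv ℝ F x) x :=
    fun x => (hFcd.differentiable (by simp) x).hasFDerivAt
  have hFderiv : ∀ x : E3, 0 < x 0 →
      fderiv ℝ F x = f x ^ 2 • Wd x + (((2:ℝ) * f x) • fderiv ℝ f x).smulRight (Wv x) :=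
    fun x hx => (Fd_deriv x hx (hfd x)).fderiv
  have hDF0 : ∀ x, x ∉ tsupport f → fderiv ℝ F x = 0 := by
    intro x hx
    rw [(hFev x hx).fderiv_eq]
    exact fderiv_const_apply 0
  set A : E3 → ℝ := fun x => 2 * f x * fderiv ℝ f x (Wv x) with hAdef
  set B : E3 → ℝ := fun x => f x ^ 2 * (-((x 0)^2)⁻¹ - (3/2) * (⟪x, x⟫_ℝ)⁻¹) with hBdef
  have hdivAB : ∀ x : E3, (∑ i, (fderiv ℝ F x (ee i)) i) = A x + B x := by
    intro x
    by_cases hx : x ∈ tsupport f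
    · have hx0 := hmemU x hx
      rw [hFderiv x hx0, Fd_divergence x hx0 (f x) (fderiv ℝ f x), hAdef, hBdef]
      ring
    · simp only [hDF0 x hx, hAdef, hBdef, hf0 x hx]
      simp
  -- compact support of F
  have hsuppF : HasCompactSupport F := by
    refine IsCompact.of_isClosed_subset hcomp (isClosed_tsupport F)
      (closure_minimal (fun x hx => ?_) (isClosed_tsupport f))
    by_contra h
    exact hx (hF0 x h)
  -- integrability helper
  have hglue : ∀ g : E3 → ℝ, ContinuousOn g U → (∀ x, x ∉ tsupport f → g x = 0) →
      Integrable g := by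
    intro g hgU hg0
    have hgc : Continuous g := by
      rw [continuous_iff_continuousAt]
      intro x
      by_cases hx : x ∈ U
      · exact hgU.continuousAt (hUopen.mem_nhds hx)
      · have hx' : x ∉ tsupport f := fun h => hx (hsupp h)
        have hev : g =ᶠ[nhds x] (fun _ => (0:ℝ)) := by
          filter_upwards [(isClosed_tsupport f).isOpen_compl.mem_nhds hx'] with y hy
          exact hg0 y hy
        exact ContinuousAt.congr continuousAt_const hev.symm
    have hgs : HasCompactSupport g :=
      IsCompact.of_isClosed_subset hcomp (isClosed_tsupport g)
        (closure_minimal (fun x hx => by by_contra h; exact hx (hg0 x h))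
          (isClosed_tsupport f))
    exact hgc.integrable_of_hasCompactSupport hgs
  -- continuity facts
  have hfc : Continuous f := hf.continuous
  have hDfc : Continuous (fun x => fderiv ℝ f x) := hf.continuous_fderiv (by simp)
  have hWc : ContinuousOn Wv U := hWcd.continuousOn
  have hgradc : Continuous (gradient f) := by
    have : Continuous fun x => (InnerProductSpace.toDual ℝ E3).symm (fderiv ℝ f x) :=
      (InnerProductSpace.toDual ℝ E3).symm.continuous.comp hDfc
    convert this using 1
    rfl
  have hQc : Continuous (fun x : E3 => ⟪x, x⟫_ℝ) := hQcd.continuous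
  -- the six integrands
  have iA : Integrable A := by
    refine hglue A (ContinuousOn.mul (Continuous.continuousOn (by continuity)) ?_)
      (fun x hx => by simp [hAdef, hf0 x hx])
    exact hDfc.continuousOn.clm_apply hWc
  have iB : Integrable B := by
    refine hglue B (ContinuousOn.mul ((hfc.pow 2).continuousOn) ?_)
      (fun x hx => by simp [hBdef, hf0 x hx])
    refine ContinuousOn.sub (ContinuousOn.neg ?_) (ContinuousOn.mul continuousOn_const ?_)
    · exact ((proj0.continuous.pow 2).continuousOn).inv₀
        (fun x hx => by have : (0:ℝ) < x 0 := hx; show x 0 ^ 2 ≠ 0; positivity)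
    · exact (hQc.continuousOn).inv₀ (fun x hx => (inner_pos x hx).ne')
  have i1 : Integrable (fun x : E3 => ‖gradient f x‖ ^ 2) := by
    refine hglue _ ((hgradc.norm.pow 2).continuousOn) (fun x hx => by simp [hgrad0 x hx])
  have i2 : Integrable (fun x : E3 => f x ^ 2 / ‖x‖ ^ 2) := by
    refine hglue _ (ContinuousOn.div ((hfc.pow 2).continuousOn)
      ((continuous_norm.pow 2).continuousOn) (fun x hx => ?_))
      (fun x hx => by simp [hf0 x hx])
    have hxne : x ≠ 0 := fun h => by
      rw [h] at hx
      have h0 : (0:ℝ) < (0 : E3) 0 := hx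
      simp at h0
    have : 0 < ‖x‖ := norm_pos_iff.mpr hxne
    positivity
  have i5 : Integrable (fun x : E3 => f x ^ 2 * ‖Wv x‖ ^ 2) := by
    refine hglue _ (ContinuousOn.mul ((hfc.pow 2).continuousOn) ((hWc.norm).pow 2))
      (fun x hx => by simp [hf0 x hx])
  have i6 : Integrable (fun x : E3 => ‖gradient f x - f x • Wv x‖ ^ 2) := by
    refine hglue _ (((ContinuousOn.sub (hgradc.continuousOn)
      (ContinuousOn.smul (hfc.continuousOn) hWc)).norm.pow 2))
      (fun x hx => by simp [hf0 x hx, hgrad0 x hx])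
  have idiv : Integrable (fun x : E3 => ∑ i, (fderiv ℝ F x (ee i)) i) := by
    refine hglue _ (Continuous.continuousOn ?_) (fun x hx => by simp [hDF0 x hx])
    have hDFc : Continuous (fun x => fderiv ℝ F x) := hFcd.continuous_fderiv (by simp)
    refine continuous_finset_sum _ (fun i _ => ?_)
    have h1 : Continuous fun x => fderiv ℝ F x (ee i) := hDFc.clm_apply continuous_const
    exact (EuclideanSpace.proj i).continuous.comp h1
  -- divergence theorem
  have hdiv0 : ∫ x : E3, ∑ i, (fderiv ℝ F x (ee i)) i = 0 :=
    div_int_zero_E hFd hsuppF idiv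
  have hAB : (∫ x, A x) + (∫ x, B x) = 0 := by
    rw [← integral_add iA iB]
    rw [← hdiv0]
    exact integral_congr_ae (Filter.Eventually.of_forall (fun x => (hdivAB x).symm))
  -- pointwise expansion of the square
  have e3 : ∀ x : E3, ‖gradient f x - f x • Wv x‖ ^ 2
      = ‖gradient f x‖ ^ 2 - A x + f x ^ 2 * ‖Wv x‖ ^ 2 := by
    intro x
    rw [norm_sub_sq_real, real_inner_smul_right, hgradinner]
    rw [norm_smul, mul_pow, Real.norm_eq_abs, sq_abs, hAdef]
    ring
  have e4 : ∀ x : E3, B x + f x ^ 2 * ‖Wv x‖ ^ 2 = -(9/4) * (f x ^ 2 / ‖x‖ ^ 2) := by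
    intro x
    by_cases hx : x ∈ tsupport f
    · have hx0 := hmemU x hx
      have hk := key_identity x hx0
      have hQ : ⟪x, x⟫_ℝ = ‖x‖ ^ 2 := real_inner_self_eq_norm_sq x
      rw [hBdef]
      have : f x ^ 2 * (-((x 0)^2)⁻¹ - (3/2) * (⟪x, x⟫_ℝ)⁻¹) + f x ^ 2 * ‖Wv x‖ ^ 2
          = f x ^ 2 * ((-((x 0)^2)⁻¹ - (3/2) * (⟪x, x⟫_ℝ)⁻¹) + ‖Wv x‖ ^ 2) := by ring
      rw [this, hk, hQ]
      rw [div_eq_mul_inv]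
      ring
    · simp [hBdef, hf0 x hx]
  -- assemble
  have hGnn : 0 ≤ ∫ x : E3, ‖gradient f x - f x • Wv x‖ ^ 2 :=
    integral_nonneg (fun x => by positivity)
  have hG : ∫ x : E3, ‖gradient f x - f x • Wv x‖ ^ 2
      = (∫ x : E3, ‖gradient f x‖ ^ 2) - (∫ x, A x) + (∫ x, f x ^ 2 * ‖Wv x‖ ^ 2) := by
    have iS : Integrable (fun x : E3 => ‖gradient f x‖ ^ 2 - A x) := i1.sub iA
    rw [← integral_sub i1 iA, ← integral_add iS i5]
    exact integral_congr_ae (Filter.Eventually.of_forall (fun x => e3 x))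
  have h45 : (∫ x, B x) + (∫ x, f x ^ 2 * ‖Wv x‖ ^ 2)
      = -(9/4) * ∫ x : E3, f x ^ 2 / ‖x‖ ^ 2 := by
    rw [← integral_add iB i5, ← integral_const_mul]
    exact integral_congr_ae (Filter.Eventually.of_forall (fun x => e4 x))
  linarith [hGnn, hG, hAB, h45]
end

section
/- Let f : ℝ → ℝ be continuously differentiable on the closed interval [0, π/2] and satisfy f(π/2) = 0. Then ∫_{[0,π/2]} f(θ)² · sin θ dθ ≤ (1/2) · ∫_{[0,π/2]} (f'(θ))² · sin θ dθ. -/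
/-!
The weight `w = tan θ`, the logarithmic derivative of the ground state `cos θ`, solves the
Riccati equation `(w sin)' - w² sin = 2 sin`, so completing the square gives
`∫ f'² sin = 2 ∫ f² sin + ∫ (f' + w f)² sin`. As `tan` blows up at `π/2`, we use
`w = sin θ / (cos θ + ε)` instead, which replaces `2 sin` by `2 sin · cos / (cos + ε)`,
and let `ε → 0` by dominated convergence.
-/

open MeasureTheory Set Real Filter Topology

/-- Expand `0 ≤ (f' + w f)² p` and integrate the cross term `2 w p f f' = w p (f²)'` by parts. -/
theorem integral_riccati_mul_sq_le {a b : ℝ} (hab : a ≤ b) {f f' p w u' : ℝ → ℝ}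
    (hf : ∀ x ∈ Icc a b, HasDerivWithinAt f (f' x) (Icc a b) x)
    (hu : ∀ x ∈ Icc a b, HasDerivWithinAt (fun x => w x * p x) (u' x) (Icc a b) x)
    (hf' : ContinuousOn f' (Icc a b)) (hu' : ContinuousOn u' (Icc a b))
    (hp : ContinuousOn p (Icc a b)) (hw : ContinuousOn w (Icc a b))
    (hp0 : ∀ x ∈ Icc a b, 0 ≤ p x) :
    ∫ x in a..b, (u' x - w x ^ 2 * p x) * f x ^ 2 ≤
      (∫ x in a..b, f' x ^ 2 * p x) + (w b * p b * f b ^ 2 - w a * p a * f a ^ 2) := by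
  set F' : ℝ → ℝ := fun x => u' x * f x ^ 2 + w x * p x * (2 * f x * f' x)
  have hfc : ContinuousOn f (Icc a b) := fun x hx => (hf x hx).continuousWithinAt
  have hF : ∀ x ∈ Icc a b, HasDerivWithinAt (fun x => w x * p x * f x ^ 2) (F' x) (Icc a b) x :=
    fun x hx => ((hu x hx).fun_mul ((hf x hx).fun_pow 2)).congr_deriv (by simp only [F']; ring)
  have hint {g : ℝ → ℝ} (hg : ContinuousOn g (Icc a b)) : IntervalIntegrable g volume a b :=
    hg.intervalIntegrable_of_Icc hab
  have hFTC : ∫ x in a..b, F' x = w b * p b * f b ^ 2 - w a * p a * f a ^ 2 :=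
    intervalIntegral.integral_eq_sub_of_hasDerivAt_of_le hab
      (fun x hx => (hF x hx).continuousWithinAt)
      (fun x hx => (hF x (Ioo_subset_Icc_self hx)).hasDerivAt (Icc_mem_nhds hx.1 hx.2))
      (hint (by fun_prop))
  rw [← hFTC, ← intervalIntegral.integral_add (hint (by fun_prop)) (hint (by fun_prop))]
  refine intervalIntegral.integral_mono_on hab (hint (by fun_prop)) (hint (by fun_prop))
    fun x hx => ?_
  have hsquare : f' x ^ 2 * p x + F' x - (u' x - w x ^ 2 * p x) * f x ^ 2 =
      (f' x + w x * f x) ^ 2 * p x := by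
    simp only [F']; ring
  linarith [mul_nonneg (sq_nonneg (f' x + w x * f x)) (hp0 x hx)]

theorem two_mul_integral_sq_mul_sin_mul_cos_div_add_le {f f' : ℝ → ℝ}
    (hf : ∀ θ ∈ Icc 0 (π / 2), HasDerivWithinAt f (f' θ) (Icc 0 (π / 2)) θ)
    (hf' : ContinuousOn f' (Icc 0 (π / 2))) (hzero : f (π / 2) = 0) {ε : ℝ} (hε : 0 < ε) :
    2 * ∫ θ in 0..π / 2, f θ ^ 2 * sin θ * (cos θ / (cos θ + ε)) ≤
      ∫ θ in 0..π / 2, f' θ ^ 2 * sin θ := by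
  have hden : ∀ θ ∈ Icc 0 (π / 2), cos θ + ε ≠ 0 := fun θ hθ =>
    (add_pos_of_nonneg_of_pos (cos_nonneg_of_mem_Icc ⟨by linarith [hθ.1, pi_pos], hθ.2⟩) hε).ne'
  set u' : ℝ → ℝ := fun θ =>
    (cos θ * (cos θ + ε) - sin θ * -sin θ) / (cos θ + ε) ^ 2 * sin θ + sin θ / (cos θ + ε) * cos θ
  have hu : ∀ θ ∈ Icc 0 (π / 2),
      HasDerivWithinAt (fun θ => sin θ / (cos θ + ε) * sin θ) (u' θ) (Icc 0 (π / 2)) θ :=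
    fun θ hθ => (((hasDerivAt_sin θ).div ((hasDerivAt_cos θ).add_const ε) (hden θ hθ)).mul
      (hasDerivAt_sin θ)).hasDerivWithinAt
  have key := integral_riccati_mul_sq_le pi_div_two_pos.le hf hu hf'
    (by fun_prop (disch := intro θ hθ; first | exact pow_ne_zero 2 (hden θ hθ) | exact hden θ hθ))
    (by fun_prop) (by fun_prop (disch := exact hden))
    (fun θ hθ => sin_nonneg_of_nonneg_of_le_pi hθ.1 (by linarith [hθ.2, pi_pos]))
  rw [hzero, sin_zero] at key
  rw [← intervalIntegral.integral_const_mul]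
  convert key using 1
  · refine intervalIntegral.integral_congr fun θ hθ => ?_
    rw [uIcc_of_le pi_div_two_pos.le] at hθ
    have := hden θ hθ
    simp only [u']
    field_simp
    ring
  · simp

theorem tendsto_integral_mul_div_add_nhdsGT {α : Type*} [MeasurableSpace α] {μ : Measure α}
    {g c : α → ℝ} (hg : Integrable g μ) (hc : AEStronglyMeasurable c μ)
    (hc0 : ∀ᵐ x ∂μ, 0 < c x) :
    Tendsto (fun ε => ∫ x, g x * (c x / (c x + ε)) ∂μ) (𝓝[>] 0) (𝓝 (∫ x, g x ∂μ)) := by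
  refine tendsto_integral_filter_of_dominated_convergence (fun x => ‖g x‖)
    (Eventually.of_forall fun ε => hg.aestronglyMeasurable.mul (hc.div₀ (hc.add_const ε)))
    ?_ hg.norm ?_
  · filter_upwards [self_mem_nhdsWithin] with ε hε
    filter_upwards [hc0] with x hx
    have hpos : 0 < c x + ε := add_pos hx hε
    rw [norm_mul, Real.norm_of_nonneg (div_nonneg hx.le hpos.le)]
    exact mul_le_of_le_one_right (norm_nonneg _) ((div_le_one hpos).2 (by linarith [mem_Ioi.1 hε]))
  · filter_upwards [hc0] with x hx
    have hcont : ContinuousAt (fun ε => g x * (c x / (c x + ε))) 0 := by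
      fun_prop (disch := simp [hx.ne'])
    simpa [hx.ne'] using hcont.tendsto.mono_left nhdsWithin_le_nhds

/-- Weighted Poincaré inequality (II.2.4): if `f` is continuously differentiable on
`[0, π/2]` (with derivative `f'` there) and `f(π/2) = 0`, then
`∫_{[0,π/2]} f(θ)² sin θ dθ ≤ (1/2) ∫_{[0,π/2]} (f'(θ))² sin θ dθ`. -/
theorem weighted_poincare_hemisphere (f f' : ℝ → ℝ)
    (hderiv : ∀ θ ∈ Icc (0 : ℝ) (π / 2),
      HasDerivWithinAt f (f' θ) (Icc (0 : ℝ) (π / 2)) θ)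
    (hcont : ContinuousOn f' (Icc (0 : ℝ) (π / 2)))
    (hzero : f (π / 2) = 0) :
    ∫ θ in Icc (0 : ℝ) (π / 2), (f θ) ^ 2 * Real.sin θ
      ≤ (1 / 2) * ∫ θ in Icc (0 : ℝ) (π / 2), (f' θ) ^ 2 * Real.sin θ := by
  have hfc : ContinuousOn f (Icc 0 (π / 2)) := fun θ hθ => (hderiv θ hθ).continuousWithinAt
  have hint : IntegrableOn (fun θ => f θ ^ 2 * sin θ) (Ioo 0 (π / 2)) :=
    (ContinuousOn.integrableOn_Icc (by fun_prop)).mono_set Ioo_subset_Icc_self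
  have hlim := tendsto_integral_mul_div_add_nhdsGT hint continuous_cos.aestronglyMeasurable
    (ae_restrict_of_forall_mem measurableSet_Ioo fun θ hθ =>
      cos_pos_of_mem_Ioo ⟨by linarith [hθ.1, pi_pos], hθ.2⟩)
  have hbound : ∀ ε ∈ Ioi (0 : ℝ),
      2 * ∫ θ in Ioo 0 (π / 2), f θ ^ 2 * sin θ * (cos θ / (cos θ + ε)) ≤
        ∫ θ in Ioo 0 (π / 2), f' θ ^ 2 * sin θ := fun ε hε => by
    simpa only [intervalIntegral.integral_of_le pi_div_two_pos.le, integral_Ioc_eq_integral_Ioo]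
      using two_mul_integral_sq_mul_sin_mul_cos_div_add_le hderiv hcont hzero hε
  rw [integral_Icc_eq_integral_Ioo, integral_Icc_eq_integral_Ioo]
  linarith [le_of_tendsto (hlim.const_mul 2) (eventually_nhdsWithin_of_forall hbound)]
end

section
/- Let λ, k be real numbers and let a, b : (0, ∞) → ℂ be continuously differentiable functions satisfying, for all x > 0, the system −a'(x) + ((λ−2)/x)·a(x) + k·b(x) = 0 and b'(x) + (λ/x)·b(x) − k·a(x) = 0. If ∫_{(0,∞)} (|a(x)|² + |b(x)|²)·x² dx < ∞ and a, b are not both identically zero, then 1/2 < λ < 3/2. -/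
/-!
Write `Φ(x) = x³ (‖a x‖² - ‖b x‖²)`. The system gives
`Φ' = (2λ - 1) x² ‖a‖² + (2λ - 3) x² ‖b‖²`, the `k`-terms cancelling. Both `Φ'` and `Φ(x)/x` are
integrable on `(0, ∞)`; after the substitution `x = eᵗ` this says that `t ↦ Φ(eᵗ)` and its
derivative are integrable on `ℝ`, so `∫ Φ' = 0`. Hence
`(2λ - 1) ∫ x² ‖a‖² + (2λ - 3) ∫ x² ‖b‖² = 0`, and for `λ ≤ 1/2` both integrals vanish, except at
`λ = 1/2`, where `Φ' = 0` makes `Φ` constant and hence zero. The case `λ ≥ 3/2` is the same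
after the symmetry `(a, b, λ) ↦ (b, a, 2 - λ)` of the system.
-/

open MeasureTheory Set Real

section ExpSubstitution

variable {E : Type*} [NormedAddCommGroup E] [NormedSpace ℝ E]

theorem integrable_exp_smul_comp_exp_iff (g : ℝ → E) :
    Integrable (fun t => exp t • g (exp t)) ↔ IntegrableOn g (Ioi 0) := by
  rw [← range_exp, ← image_univ, integrableOn_image_iff_integrableOn_abs_deriv_smul
    MeasurableSet.univ (fun t _ => (hasDerivAt_exp t).hasDerivWithinAt) exp_injective.injOn]
  simp [abs_of_pos (exp_pos _)]

theorem integral_exp_smul_comp_exp (g : ℝ → E) :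
    ∫ t, exp t • g (exp t) = ∫ x in Ioi 0, g x := by
  rw [← range_exp, ← image_univ, integral_image_eq_integral_abs_deriv_smul MeasurableSet.univ
    (fun t _ => (hasDerivAt_exp t).hasDerivWithinAt) exp_injective.injOn]
  simp [abs_of_pos (exp_pos _)]

variable {f f' : ℝ → E}

theorem integrable_comp_exp_of_integrableOn_inv_smul
    (hf : IntegrableOn (fun x => x⁻¹ • f x) (Ioi 0)) : Integrable (f ∘ exp) := by
  refine ((integrable_exp_smul_comp_exp_iff _).2 hf).congr (.of_forall fun t => ?_)
  simp [smul_smul, (exp_pos t).ne']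

theorem integral_Ioi_zero_deriv_eq_zero (hderiv : ∀ x ∈ Ioi 0, HasDerivAt f (f' x) x)
    (hf' : IntegrableOn f' (Ioi 0)) (hf : IntegrableOn (fun x => x⁻¹ • f x) (Ioi 0)) :
    ∫ x in Ioi 0, f' x = 0 := by
  rw [← integral_exp_smul_comp_exp]
  exact integral_eq_zero_of_hasDerivAt_of_integrable
    (fun t => (hderiv _ (exp_pos t)).scomp t (hasDerivAt_exp t))
    ((integrable_exp_smul_comp_exp_iff _).2 hf') (integrable_comp_exp_of_integrableOn_inv_smul hf)

theorem eqOn_zero_of_hasDerivAt_zero (hderiv : ∀ x ∈ Ioi 0, HasDerivAt f 0 x)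
    (hf : IntegrableOn (fun x => x⁻¹ • f x) (Ioi 0)) : EqOn f 0 (Ioi 0) := by
  have hF : ∀ t, HasDerivAt (f ∘ exp) 0 t := fun t => by
    simpa using (hderiv _ (exp_pos t)).scomp t (hasDerivAt_exp t)
  have hconst : f ∘ exp = fun _ => f (exp 0) := funext fun t =>
    is_const_of_deriv_eq_zero (fun t => (hF t).differentiableAt) (fun t => (hF t).deriv) t 0
  have hint := integrable_comp_exp_of_integrableOn_inv_smul hf
  rw [hconst, integrable_const_iff] at hint
  rintro x (hx : 0 < x)
  rw [← exp_log hx, ← Function.comp_apply (f := f), hconst]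
  simpa using hint.resolve_right (not_isFiniteMeasure_iff.2 Real.volume_univ)

end ExpSubstitution

section WeightedL2

variable {E : Type*} [NormedAddCommGroup E] {a b : ℝ → E}

theorem integrableOn_sq_mul_norm_sq_of_add (ha : ContinuousOn a (Ioi 0))
    (hint : IntegrableOn (fun x => (‖a x‖ ^ 2 + ‖b x‖ ^ 2) * x ^ 2) (Ioi 0)) :
    IntegrableOn (fun x => x ^ 2 * ‖a x‖ ^ 2) (Ioi 0) := by
  refine hint.mono' (((continuousOn_pow 2).mul (ha.norm.pow 2)).aestronglyMeasurable
    measurableSet_Ioi) (.of_forall fun x => ?_)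
  rw [Real.norm_of_nonneg (by positivity)]
  nlinarith [mul_nonneg (sq_nonneg x) (sq_nonneg ‖b x‖)]

theorem integrableOn_inv_smul_cube_mul_sub
    (hA : IntegrableOn (fun x => x ^ 2 * ‖a x‖ ^ 2) (Ioi 0))
    (hB : IntegrableOn (fun x => x ^ 2 * ‖b x‖ ^ 2) (Ioi 0)) :
    IntegrableOn (fun x => x⁻¹ • (x ^ 3 * (‖a x‖ ^ 2 - ‖b x‖ ^ 2))) (Ioi 0) := by
  refine (hA.sub hB).congr_fun (fun x (hx : 0 < x) => ?_) measurableSet_Ioi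
  simp only [Pi.sub_apply, smul_eq_mul]
  field_simp

theorem eqOn_zero_of_integral_sq_mul_norm_sq_eq_zero (ha : ContinuousOn a (Ioi 0))
    (hA : IntegrableOn (fun x => x ^ 2 * ‖a x‖ ^ 2) (Ioi 0))
    (h0 : ∫ x in Ioi 0, x ^ 2 * ‖a x‖ ^ 2 = 0) : EqOn a 0 (Ioi 0) := by
  have hae := (setIntegral_eq_zero_iff_of_nonneg_ae (.of_forall fun x => by positivity) hA).1 h0
  intro x (hx : 0 < x)
  have := Measure.eqOn_open_of_ae_eq hae isOpen_Ioi ((continuousOn_pow 2).mul (ha.norm.pow 2))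
    continuousOn_const hx
  simpa [hx.ne'] using this

end WeightedL2

section RadialSystem

variable {E : Type*} [NormedAddCommGroup E] [InnerProductSpace ℝ E] {lam k : ℝ} {a b : ℝ → E}

def IsRadialSolution (lam k : ℝ) (a b : ℝ → E) : Prop :=
  ∀ x ∈ Ioi (0 : ℝ), HasDerivAt a (((lam - 2) / x) • a x + k • b x) x ∧
    HasDerivAt b (k • a x - (lam / x) • b x) x

theorem IsRadialSolution.swap (h : IsRadialSolution lam k a b) :
    IsRadialSolution (2 - lam) k b a := by
  intro x hx
  obtain ⟨ha, hb⟩ := h x hx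
  constructor
  · convert hb using 1
    module
  · convert ha using 1
    module

theorem IsRadialSolution.hasDerivAt_cube_mul_sub_norm_sq (h : IsRadialSolution lam k a b) {x : ℝ}
    (hx : 0 < x) :
    HasDerivAt (fun y => y ^ 3 * (‖a y‖ ^ 2 - ‖b y‖ ^ 2))
      ((2 * lam - 1) * (x ^ 2 * ‖a x‖ ^ 2) + (2 * lam - 3) * (x ^ 2 * ‖b x‖ ^ 2)) x := by
  obtain ⟨ha, hb⟩ := h x hx
  refine ((hasDerivAt_pow 3 x).mul (ha.norm_sq.sub hb.norm_sq)).congr_deriv ?_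
  simp only [Pi.sub_apply, inner_add_right, inner_sub_right, real_inner_smul_right,
    real_inner_self_eq_norm_sq, real_inner_comm (a x) (b x)]
  field_simp
  ring

theorem IsRadialSolution.continuousOn_left (h : IsRadialSolution lam k a b) :
    ContinuousOn a (Ioi 0) := fun x hx => (h x hx).1.continuousAt.continuousWithinAt

theorem IsRadialSolution.continuousOn_right (h : IsRadialSolution lam k a b) :
    ContinuousOn b (Ioi 0) := h.swap.continuousOn_left

theorem IsRadialSolution.integrableOn_left (h : IsRadialSolution lam k a b)
    (hint : IntegrableOn (fun x => (‖a x‖ ^ 2 + ‖b x‖ ^ 2) * x ^ 2) (Ioi 0)) :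
    IntegrableOn (fun x => x ^ 2 * ‖a x‖ ^ 2) (Ioi 0) :=
  integrableOn_sq_mul_norm_sq_of_add h.continuousOn_left hint

theorem IsRadialSolution.integrableOn_right (h : IsRadialSolution lam k a b)
    (hint : IntegrableOn (fun x => (‖a x‖ ^ 2 + ‖b x‖ ^ 2) * x ^ 2) (Ioi 0)) :
    IntegrableOn (fun x => x ^ 2 * ‖b x‖ ^ 2) (Ioi 0) :=
  h.swap.integrableOn_left (by simpa only [add_comm] using hint)

theorem IsRadialSolution.integral_identity (h : IsRadialSolution lam k a b)
    (hint : IntegrableOn (fun x => (‖a x‖ ^ 2 + ‖b x‖ ^ 2) * x ^ 2) (Ioi 0)) :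
    (2 * lam - 1) * (∫ x in Ioi 0, x ^ 2 * ‖a x‖ ^ 2)
      + (2 * lam - 3) * (∫ x in Ioi 0, x ^ 2 * ‖b x‖ ^ 2) = 0 := by
  have hA := (h.integrableOn_left hint).const_mul (2 * lam - 1)
  have hB := (h.integrableOn_right hint).const_mul (2 * lam - 3)
  rw [← integral_const_mul, ← integral_const_mul, ← integral_add hA hB]
  exact integral_Ioi_zero_deriv_eq_zero (fun x hx => h.hasDerivAt_cube_mul_sub_norm_sq hx)
    (hA.add hB)
    (integrableOn_inv_smul_cube_mul_sub (h.integrableOn_left hint) (h.integrableOn_right hint))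

theorem IsRadialSolution.eqOn_zero_of_le_half (h : IsRadialSolution lam k a b)
    (hint : IntegrableOn (fun x => (‖a x‖ ^ 2 + ‖b x‖ ^ 2) * x ^ 2) (Ioi 0))
    (hlam : lam ≤ 1 / 2) : EqOn a 0 (Ioi 0) ∧ EqOn b 0 (Ioi 0) := by
  have hA := h.integrableOn_left hint
  have hB := h.integrableOn_right hint
  have hA0 : 0 ≤ ∫ x in Ioi 0, x ^ 2 * ‖a x‖ ^ 2 := integral_nonneg fun x => by positivity
  have hB0 : 0 ≤ ∫ x in Ioi 0, x ^ 2 * ‖b x‖ ^ 2 := integral_nonneg fun x => by positivity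
  have key := h.integral_identity hint
  have hb : EqOn b 0 (Ioi 0) :=
    eqOn_zero_of_integral_sq_mul_norm_sq_eq_zero h.continuousOn_right hB (by nlinarith)
  refine ⟨?_, hb⟩
  rcases hlam.lt_or_eq with hlt | rfl
  · exact eqOn_zero_of_integral_sq_mul_norm_sq_eq_zero h.continuousOn_left hA (by nlinarith)
  · have hΦ : EqOn (fun x => x ^ 3 * (‖a x‖ ^ 2 - ‖b x‖ ^ 2)) 0 (Ioi 0) :=
      eqOn_zero_of_hasDerivAt_zero
        (fun x hx => by simpa [hb hx] using h.hasDerivAt_cube_mul_sub_norm_sq hx)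
        (integrableOn_inv_smul_cube_mul_sub hA hB)
    intro x (hx : 0 < x)
    simpa [hb hx, hx.ne'] using hΦ hx

end RadialSystem

theorem eigenvalue_constraint_general (lam k : ℝ) (a b a' b' : ℝ → ℂ)
    (ha : ∀ x ∈ Ioi (0 : ℝ), HasDerivAt a (a' x) x)
    (hb : ∀ x ∈ Ioi (0 : ℝ), HasDerivAt b (b' x) x)
    (heq1 : ∀ x ∈ Ioi (0 : ℝ),
      -a' x + (((lam - 2) / x : ℝ) : ℂ) * a x + (k : ℂ) * b x = 0)
    (heq2 : ∀ x ∈ Ioi (0 : ℝ),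
      b' x + ((lam / x : ℝ) : ℂ) * b x - (k : ℂ) * a x = 0)
    (hint : IntegrableOn (fun x => (‖a x‖ ^ 2 + ‖b x‖ ^ 2) * x ^ 2) (Ioi (0 : ℝ)))
    (hne : ¬ ∀ x ∈ Ioi (0 : ℝ), a x = 0 ∧ b x = 0) :
    1 / 2 < lam ∧ lam < 3 / 2 := by
  have hsol : IsRadialSolution lam k a b := fun x hx =>
    ⟨(ha x hx).congr_deriv <| by
        rw [Complex.real_smul, Complex.real_smul]; linear_combination -heq1 x hx,
      (hb x hx).congr_deriv <| by
        rw [Complex.real_smul, Complex.real_smul]; linear_combination heq2 x hx⟩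
  constructor
  · by_contra! hlam
    obtain ⟨ha0, hb0⟩ := hsol.eqOn_zero_of_le_half hint hlam
    exact hne fun x hx => ⟨ha0 hx, hb0 hx⟩
  · by_contra! hlam
    obtain ⟨hb0, ha0⟩ :=
      hsol.swap.eqOn_zero_of_le_half (by simpa only [add_comm] using hint) (by linarith)
    exact hne fun x hx => ⟨ha0 hx, hb0 hx⟩

/-- Eigenvalue constraint (II.6.6)–(II.6.8): if `(a, b)` is a not-identically-zero continuously
differentiable solution on `(0, ∞)` of
`−a' + ((λ−2)/x)a + k b = 0`, `b' + (λ/x)b − k a = 0`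
with `∫ (|a|² + |b|²) x² dx < ∞`, then `1/2 < λ < 3/2`. -/
theorem eigenvalue_constraint (lam k : ℝ) (a b a' b' : ℝ → ℂ)
    (ha : ∀ x ∈ Ioi (0 : ℝ), HasDerivAt a (a' x) x)
    (hb : ∀ x ∈ Ioi (0 : ℝ), HasDerivAt b (b' x) x)
    (hca : ContinuousOn a' (Ioi (0 : ℝ))) (hcb : ContinuousOn b' (Ioi (0 : ℝ)))
    (heq1 : ∀ x ∈ Ioi (0 : ℝ),
      -a' x + (((lam - 2) / x : ℝ) : ℂ) * a x + (k : ℂ) * b x = 0)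
    (heq2 : ∀ x ∈ Ioi (0 : ℝ),
      b' x + ((lam / x : ℝ) : ℂ) * b x - (k : ℂ) * a x = 0)
    (hint : IntegrableOn (fun x => (‖a x‖ ^ 2 + ‖b x‖ ^ 2) * x ^ 2) (Ioi (0 : ℝ)))
    (hne : ¬ ∀ x ∈ Ioi (0 : ℝ), a x = 0 ∧ b x = 0) :
    1 / 2 < lam ∧ lam < 3 / 2 :=
  eigenvalue_constraint_general lam k a b a' b' ha hb heq1 heq2 hint hne
end

section
/- Let f : ℂ → ℂ be an entire function (differentiable everywhere in the complex sense) that is not identically zero, and suppose there exists a real number λ such that |f(r·z)| = r^λ · |f(z)| for every real r > 0 and every z ∈ ℂ. Then λ is a nonnegative integer p and there exists a nonzero constant c ∈ ℂ with f(z) = c·z^p for all z ∈ ℂ. -/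
/-!
Factor `f z = z ^ p * g z` with `p` the order of vanishing of `f` at `0`, so that `g` is entire
and `g 0 ≠ 0`. The modulus of `g` is then homogeneous of degree `λ - p` along every ray; letting
`r → 0⁺` along the ray through `1`, `r ^ (λ - p)` must converge to the nonzero number
`‖g 0‖ / ‖g 1‖`, which forces `λ = p`. With degree `0`, the same limit along any ray shows that
`‖g‖` is constant, so `g` is bounded and constant by Liouville's theorem.
-/

open Filter Topology Function Set

lemma Real.eq_zero_of_tendsto_rpow_nhdsGT_zero {a L : ℝ} (hL : L ≠ 0)
    (h : Tendsto (fun r : ℝ => r ^ a) (𝓝[>] 0) (𝓝 L)) : a = 0 := by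
  rcases lt_trichotomy a 0 with ha | ha | ha
  · exact absurd h (not_tendsto_nhds_of_tendsto_atTop (tendsto_rpow_neg_nhdsGT_zero ha) L)
  · exact ha
  · have h0 : Tendsto (fun r : ℝ => r ^ a) (𝓝[>] 0) (𝓝 0) := by
      simpa [Real.zero_rpow ha.ne'] using
        (Real.continuousAt_rpow_const 0 a (Or.inr ha.le)).tendsto.mono_left nhdsWithin_le_nhds
    exact absurd (tendsto_nhds_unique h h0) hL

section NormHomogeneous

variable {E F : Type*} [NormedAddCommGroup E] [NormedSpace ℝ E] [NormedAddCommGroup F]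
  {g : E → F} {a : ℝ} {z : E}

lemma tendsto_rpow_mul_norm_of_norm_smul_eq (hg : ContinuousAt g 0)
    (h : ∀ r : ℝ, 0 < r → ‖g (r • z)‖ = r ^ a * ‖g z‖) :
    Tendsto (fun r : ℝ => r ^ a * ‖g z‖) (𝓝[>] 0) (𝓝 ‖g 0‖) := by
  have hray : Tendsto (fun r : ℝ => r • z) (𝓝[>] 0) (𝓝 0) :=
    ((continuous_id.smul continuous_const).tendsto' 0 0 (zero_smul ℝ z)).mono_left
      nhdsWithin_le_nhds
  exact (hg.norm.tendsto.comp hray).congr' (eventually_mem_nhdsWithin.mono h)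

lemma eq_zero_of_norm_smul_eq_rpow_mul (hg : ContinuousAt g 0) (hg0 : g 0 ≠ 0)
    (h : ∀ r : ℝ, 0 < r → ‖g (r • z)‖ = r ^ a * ‖g z‖) : a = 0 := by
  have hlim := tendsto_rpow_mul_norm_of_norm_smul_eq hg h
  have hz : ‖g z‖ ≠ 0 := by
    intro hz
    simp only [hz, mul_zero] at hlim
    exact hg0 (norm_eq_zero.1 (tendsto_nhds_unique tendsto_const_nhds hlim).symm)
  refine Real.eq_zero_of_tendsto_rpow_nhdsGT_zero (div_ne_zero (norm_ne_zero_iff.2 hg0) hz) ?_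
  simpa [hz] using hlim.div_const ‖g z‖

lemma norm_eq_norm_zero_of_norm_smul_eq (hg : ContinuousAt g 0)
    (h : ∀ r : ℝ, 0 < r → ‖g (r • z)‖ = ‖g z‖) : ‖g z‖ = ‖g 0‖ := by
  simpa using tendsto_rpow_mul_norm_of_norm_smul_eq (a := 0) hg (by simpa using h)

end NormHomogeneous

section Factorization

variable {E : Type*} [NormedAddCommGroup E] [NormedSpace ℂ E] {f g : ℂ → E}

lemma Complex.differentiable_iterate_dslope [CompleteSpace E] (hf : Differentiable ℂ f) (c : ℂ)
    (n : ℕ) :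
    Differentiable ℂ ((swap dslope c)^[n] f) := by
  induction n with
  | zero => exact hf
  | succ n ih =>
    rw [iterate_succ_apply']
    exact differentiableOn_univ.1 ((differentiableOn_dslope univ_mem).2 ih.differentiableOn)

lemma Differentiable.exists_eq_pow_smul [CompleteSpace E] (hf : Differentiable ℂ f)
    (hne : ∃ z, f z ≠ 0) (c : ℂ) :
    ∃ (n : ℕ) (g : ℂ → E), Differentiable ℂ g ∧ g c ≠ 0 ∧ ∀ z, f z = (z - c) ^ n • g z := by
  obtain ⟨P, hP⟩ := hf.analyticAt c
  have hP0 : P ≠ 0 := by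
    rintro rfl
    obtain ⟨z, hz⟩ := hne
    exact hz (AnalyticOnNhd.eqOn_zero_of_preconnected_of_eventuallyEq_zero
      (fun x _ => hf.analyticAt x) isPreconnected_univ (mem_univ c) (hP.locally_zero_iff.2 rfl)
      (mem_univ z))
  exact ⟨P.order, _, Complex.differentiable_iterate_dslope hf c _,
    hP.iterate_dslope_fslope_ne_zero hP0, hP.eq_pow_order_mul_iterate_dslope⟩

lemma norm_smul_eq_rpow_sub_mul_of_eq_pow_smul {p : ℕ} {lam : ℝ}
    (hfg : ∀ z, f z = z ^ p • g z)
    (hhom : ∀ r : ℝ, 0 < r → ∀ z : ℂ, ‖f (r • z)‖ = r ^ lam * ‖f z‖)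
    {z : ℂ} (hz : z ≠ 0) {r : ℝ} (hr : 0 < r) :
    ‖g (r • z)‖ = r ^ (lam - p) * ‖g z‖ := by
  have hzp : 0 < ‖z‖ ^ p := pow_pos (norm_pos_iff.2 hz) p
  have hrp : 0 < r ^ p := pow_pos hr p
  have key := hhom r hr z
  simp only [hfg, norm_smul, norm_pow, Real.norm_of_nonneg hr.le, mul_pow] at key
  rw [Real.rpow_sub hr, Real.rpow_natCast, div_mul_eq_mul_div, eq_div_iff hrp.ne']
  apply mul_left_cancel₀ hzp.ne'
  linear_combination key

end Factorization

/-- Classification of entire functions with homogeneous modulus (used in (II.5.10)):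
if `f` is entire, not identically zero, and `|f(r z)| = r^λ |f(z)|` for all real `r > 0`
and all `z`, then `λ` is a nonnegative integer `p` and `f(z) = c z^p` for some `c ≠ 0`. -/
theorem entire_homogeneous_is_monomial (f : ℂ → ℂ) (hf : Differentiable ℂ f)
    (hne : ∃ z, f z ≠ 0) (lam : ℝ)
    (hhom : ∀ r : ℝ, 0 < r → ∀ z : ℂ,
      ‖f ((r : ℂ) * z)‖ = r ^ lam * ‖f (z)‖) :
    ∃ p : ℕ, lam = (p : ℝ) ∧ ∃ c : ℂ, c ≠ 0 ∧ ∀ z, f z = c * z ^ p := by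
  obtain ⟨p, g, hg, hg0, hfg⟩ := hf.exists_eq_pow_smul hne 0
  simp only [sub_zero] at hfg
  have hray : ∀ z : ℂ, z ≠ 0 → ∀ r : ℝ, 0 < r → ‖g (r • z)‖ = r ^ (lam - p) * ‖g z‖ :=
    fun z hz r hr => norm_smul_eq_rpow_sub_mul_of_eq_pow_smul hfg
      (by simpa only [Complex.real_smul] using hhom) hz hr
  have hlam : lam = p :=
    sub_eq_zero.1 (eq_zero_of_norm_smul_eq_rpow_mul hg.continuous.continuousAt hg0
      (hray 1 one_ne_zero))
  have hnorm : ∀ z, ‖g z‖ = ‖g 0‖ := by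
    intro z
    rcases eq_or_ne z 0 with rfl | hz
    · rfl
    · exact norm_eq_norm_zero_of_norm_smul_eq hg.continuous.continuousAt
        fun r hr => by simpa [hlam] using hray z hz r hr
  have hconst : ∀ z, g z = g 0 := fun z => hg.apply_eq_apply_of_bounded
    (isBounded_iff_forall_norm_le.2 ⟨‖g 0‖, forall_mem_range.2 fun z => (hnorm z).le⟩) z 0
  exact ⟨p, hlam, g 0, hg0, fun z => by rw [hfg, hconst, smul_eq_mul, mul_comm]⟩
end

section
/- Let λ > 0, let f : [1, ∞) → ℝ be a nonnegative continuously differentiable function, and let h : [1, ∞) → ℝ be a nonnegative Lebesgue-integrable function such that f(t)·f'(t) ≥ λ·f(t)² − h(t) for all t ≥ 1, and suppose ∫_{[1,∞)} f(t)²/t² dt < ∞. Then for every t ≥ 1 one has f(t)² + 2λ·∫_{[t,∞)} f(s)² ds ≤ 2·∫_{[t,∞)} h(s) ds. -/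
/-!
Write `g = f²` and `H = ∫_{[t,∞)} h`. Integrating `(f²)' = 2 f f' ≥ 2λ f² - 2h` over `[t, T]`
shows that the energy `Φ(T) = g(t) - 2H + 2λ ∫_t^T g` satisfies `Φ(T) ≤ g(T)`.
As `Φ' = 2λ g ≥ 2λ Φ`, once `Φ` is positive it stays positive and `g` grows at least linearly,
which is incompatible with `∫ g/s² < ∞`. Hence `Φ ≤ 0` on `[t, ∞)`, so `g` is integrable there,
and letting `T → ∞` gives the estimate.
-/

open MeasureTheory Set Filter

section

variable {g : ℝ → ℝ} {a c t : ℝ}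

lemma not_integrableOn_div_sq_of_linear_le {κ T₀ : ℝ} (hκ : 0 < κ)
    (hg : ∀ s ∈ Ici T₀, κ * (s - T₀) ≤ g s) :
    ¬ IntegrableOn (fun s => g s / s ^ 2) (Ici T₀) := by
  intro hdecay
  -- for `s > R` we have `s - T₀ ≥ s / 2`, hence `s⁻¹ ≤ (2 / κ) * (g s / s ^ 2)`
  set R := max (2 * T₀) 1
  have hR₀ : 2 * T₀ ≤ R := le_max_left _ _
  have hR₁ : 1 ≤ R := le_max_right _ _
  have hsub : Ioi R ⊆ Ici T₀ := fun s (hs : R < s) => show T₀ ≤ s by linarith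
  refine not_integrableOn_Ioi_inv (a := R) <|
    ((hdecay.mono_set hsub).const_mul (2 / κ)).mono' (by fun_prop) ?_
  refine (ae_restrict_iff' measurableSet_Ioi).mpr (Eventually.of_forall fun s hs => ?_)
  have hs : R < s := hs
  have hs₀ : 0 < s := by linarith
  have hlin : κ * s ≤ 2 * g s := by nlinarith [hg s (hsub hs)]
  rw [Real.norm_of_nonneg (inv_nonneg.mpr hs₀.le), div_mul_div_comm, le_div_iff₀ (by positivity)]
  calc s⁻¹ * (κ * s ^ 2) = κ * s := by field_simp
    _ ≤ 2 * g s := hlin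

lemma energy_mul_linear_le (hc : 0 ≤ c) (hg0 : ∀ s ∈ Ici t, 0 ≤ g s)
    (hg : ∀ T, IntegrableOn g (Icc t T))
    (henergy : ∀ T ∈ Ici t, a + c * ∫ s in t..T, g s ≤ g T) {T₀ T : ℝ} (hT₀ : t ≤ T₀)
    (hT : T₀ ≤ T) :
    (a + c * ∫ s in t..T₀, g s) * (1 + c * (T - T₀)) ≤ g T := by
  set ε := a + c * ∫ s in t..T₀, g s
  have hsplit : ∀ S ∈ Ici T₀, a + c * ∫ s in t..S, g s = ε + c * ∫ s in T₀..S, g s := by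
    intro S hS
    rw [← intervalIntegral.integral_add_adjacent_intervals
      ((intervalIntegrable_iff_integrableOn_Icc_of_le hT₀).mpr (hg T₀))
      ((intervalIntegrable_iff_integrableOn_Icc_of_le hS).mpr
        ((hg S).mono_set (Icc_subset_Icc_left hT₀)))]
    ring
  have hge : ∀ s ∈ Icc T₀ T, ε ≤ g s := fun s hs => by
    have henergy_s := henergy s (hT₀.trans hs.1)
    rw [hsplit s hs.1] at henergy_s
    have hpos := intervalIntegral.integral_nonneg (μ := volume) hs.1
      fun u hu => hg0 u (hT₀.trans hu.1)
    linarith [mul_nonneg hc hpos]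
  calc ε * (1 + c * (T - T₀)) = ε + c * ∫ _ in T₀..T, ε := by
        simp only [intervalIntegral.integral_const, smul_eq_mul]; ring
    _ ≤ ε + c * ∫ s in T₀..T, g s := by
      gcongr
      exact intervalIntegral.integral_mono_on hT intervalIntegrable_const
        ((intervalIntegrable_iff_integrableOn_Icc_of_le hT).mpr
          ((hg T).mono_set (Icc_subset_Icc_left hT₀))) hge
    _ = a + c * ∫ s in t..T, g s := (hsplit T hT).symm
    _ ≤ g T := henergy T (hT₀.trans hT)

lemma energy_nonpos (hc : 0 < c) (hg0 : ∀ s ∈ Ici t, 0 ≤ g s)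
    (hg : ∀ T, IntegrableOn g (Icc t T))
    (henergy : ∀ T ∈ Ici t, a + c * ∫ s in t..T, g s ≤ g T)
    (hdecay : IntegrableOn (fun s => g s / s ^ 2) (Ici t)) {T₀ : ℝ} (hT₀ : t ≤ T₀) :
    a + c * ∫ s in t..T₀, g s ≤ 0 := by
  by_contra! hε
  refine not_integrableOn_div_sq_of_linear_le (mul_pos hε hc) (fun s hs => ?_)
    (hdecay.mono_set (Ici_subset_Ici.mpr hT₀))
  have hgrowth := energy_mul_linear_le hc.le hg0 hg henergy hT₀ hs
  linarith

lemma integrableOn_Ioi_of_energy (hc : 0 < c) (hg0 : ∀ s ∈ Ici t, 0 ≤ g s)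
    (hg : ∀ T, IntegrableOn g (Icc t T))
    (henergy : ∀ T ∈ Ici t, a + c * ∫ s in t..T, g s ≤ g T)
    (hdecay : IntegrableOn (fun s => g s / s ^ 2) (Ici t)) :
    IntegrableOn g (Ioi t) := by
  refine integrableOn_Ioi_of_intervalIntegral_norm_bounded (-a / c) t
    (fun T => (hg T).mono_set Ioc_subset_Icc_self) tendsto_id ?_
  filter_upwards [eventually_ge_atTop t] with T hT
  rw [le_div_iff₀ hc]
  have hΦ := energy_nonpos hc hg0 hg henergy hdecay hT
  have hnorm : ∫ s in t..T, ‖g s‖ = ∫ s in t..T, g s :=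
    intervalIntegral.integral_congr fun s hs => by
      rw [uIcc_of_le hT] at hs
      exact Real.norm_of_nonneg (hg0 s hs.1)
  rw [hnorm]
  linarith

lemma add_mul_integral_Ioi_nonpos (hc : 0 < c) (hg0 : ∀ s ∈ Ici t, 0 ≤ g s)
    (hg : ∀ T, IntegrableOn g (Icc t T))
    (henergy : ∀ T ∈ Ici t, a + c * ∫ s in t..T, g s ≤ g T)
    (hdecay : IntegrableOn (fun s => g s / s ^ 2) (Ici t)) :
    a + c * ∫ s in Ioi t, g s ≤ 0 := by
  have hlim := intervalIntegral_tendsto_integral_Ioi t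
    (integrableOn_Ioi_of_energy hc hg0 hg henergy hdecay) tendsto_id
  refine le_of_tendsto ((hlim.const_mul c).const_add a) ?_
  filter_upwards [eventually_ge_atTop t] with T hT
  exact energy_nonpos hc hg0 hg henergy hdecay hT

end

lemma sq_add_two_mul_integral_sq_le {f f' h : ℝ → ℝ} {lam t T : ℝ} (hT : t ≤ T)
    (hderiv : ∀ s ∈ Icc t T, HasDerivAt f (f' s) s) (hh : IntegrableOn h (Icc t T))
    (hineq : ∀ s ∈ Icc t T, lam * f s ^ 2 - h s ≤ f s * f' s) :
    f t ^ 2 + 2 * lam * ∫ s in t..T, f s ^ 2 ≤ f T ^ 2 + 2 * ∫ s in t..T, h s := by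
  have hcont : ContinuousOn (fun s => f s ^ 2) (Icc t T) :=
    ContinuousOn.pow (fun s hs => (hderiv s hs).continuousAt.continuousWithinAt) 2
  have hsq : IntegrableOn (fun s => f s ^ 2) (Icc t T) := hcont.integrableOn_Icc
  have hφ : IntegrableOn (fun s => 2 * (lam * f s ^ 2 - h s)) (Icc t T) :=
    ((hsq.const_mul lam).sub hh).const_mul 2
  have hfh := intervalIntegral.integral_le_sub_of_hasDeriv_right_of_le hT hcont
    (fun s hs => ((hderiv s (Ioo_subset_Icc_self hs)).pow 2).hasDerivWithinAt) hφ
    fun s hs => by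
      simp only [Nat.cast_ofNat, Nat.add_one_sub_one, pow_one]
      linarith [hineq s (Ioo_subset_Icc_self hs)]
  rw [intervalIntegral.integral_const_mul, intervalIntegral.integral_sub
    ((intervalIntegrable_iff_integrableOn_Icc_of_le hT).mpr (hsq.const_mul lam))
    ((intervalIntegrable_iff_integrableOn_Icc_of_le hT).mpr hh),
    intervalIntegral.integral_const_mul] at hfh
  linarith

theorem negative_spectrum_bound_general (lam : ℝ) (hlam : 0 < lam) (f f' h : ℝ → ℝ)
    (hderiv : ∀ t ∈ Ici (1 : ℝ), HasDerivAt f (f' t) t)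
    (hh0 : ∀ t ∈ Ici (1 : ℝ), 0 ≤ h t)
    (hhint : IntegrableOn h (Ici (1 : ℝ)))
    (hineq : ∀ t ∈ Ici (1 : ℝ), lam * (f t) ^ 2 - h t ≤ f t * f' t)
    (hint : IntegrableOn (fun t => (f t) ^ 2 / t ^ 2) (Ici (1 : ℝ))) :
    ∀ t ∈ Ici (1 : ℝ),
      (f t) ^ 2 + 2 * lam * ∫ s in Ici t, (f s) ^ 2 ≤ 2 * ∫ s in Ici t, h s := by
  intro t ht
  have hsub : Ici t ⊆ Ici 1 := Ici_subset_Ici.mpr ht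
  have hIcc : ∀ T, Icc t T ⊆ Ici 1 := fun T => Icc_subset_Ici_self.trans hsub
  have henergy : ∀ T ∈ Ici t,
      (f t ^ 2 - 2 * ∫ s in Ici t, h s) + 2 * lam * ∫ s in t..T, f s ^ 2 ≤ f T ^ 2 := by
    intro T hT
    have hfT := sq_add_two_mul_integral_sq_le hT (fun s hs => hderiv s (hIcc T hs))
      (hhint.mono_set (hIcc T)) (fun s hs => hineq s (hIcc T hs))
    have hhT : ∫ s in t..T, h s ≤ ∫ s in Ici t, h s := by
      rw [intervalIntegral.integral_of_le hT]
      exact setIntegral_mono_set (hhint.mono_set hsub)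
        ((ae_restrict_iff' measurableSet_Ici).mpr (.of_forall fun s hs => hh0 s (hsub hs)))
        (Ioc_subset_Icc_self.trans Icc_subset_Ici_self).eventuallyLE
    linarith
  have hf : ContinuousOn f (Ici 1) := fun s hs => (hderiv s hs).continuousAt.continuousWithinAt
  have hΦ := add_mul_integral_Ioi_nonpos (by positivity) (fun s _ => sq_nonneg (f s))
    (fun T => ((hf.pow 2).mono (hIcc T)).integrableOn_Icc) henergy (hint.mono_set hsub)
  rw [← integral_Ici_eq_integral_Ioi] at hΦ
  linarith

/-- Estimate (III.6.7) of Lemma III.6.1: if `f ≥ 0` is `C¹` on `[1, ∞)`, `h ≥ 0` is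
integrable, `f f' ≥ λ f² − h` on `[1, ∞)`, and `∫ f²/t² < ∞`, then for every `t ≥ 1`,
`f(t)² + 2λ ∫_{[t,∞)} f² ≤ 2 ∫_{[t,∞)} h`. -/
theorem negative_spectrum_bound (lam : ℝ) (hlam : 0 < lam) (f f' h : ℝ → ℝ)
    (hf0 : ∀ t ∈ Ici (1 : ℝ), 0 ≤ f t)
    (hderiv : ∀ t ∈ Ici (1 : ℝ), HasDerivAt f (f' t) t)
    (hcont : ContinuousOn f' (Ici (1 : ℝ)))
    (hh0 : ∀ t ∈ Ici (1 : ℝ), 0 ≤ h t)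
    (hhint : IntegrableOn h (Ici (1 : ℝ)))
    (hineq : ∀ t ∈ Ici (1 : ℝ), lam * (f t) ^ 2 - h t ≤ f t * f' t)
    (hint : IntegrableOn (fun t => (f t) ^ 2 / t ^ 2) (Ici (1 : ℝ))) :
    ∀ t ∈ Ici (1 : ℝ),
      (f t) ^ 2 + 2 * lam * ∫ s in Ici t, (f s) ^ 2 ≤ 2 * ∫ s in Ici t, h s :=
  negative_spectrum_bound_general lam hlam f f' h hderiv hh0 hhint hineq hint
end

section
/- Let c₀ ≥ 0, s > 0 with c₀·s² ≤ 1, and let t₀ ∈ ℝ. Let u : [t₀ − s, t₀ + s] → ℝ be a nonnegative twice continuously differentiable function with u''(t) ≥ −c₀·u(t) for all t in the interval. Then for every t ∈ [t₀ − s, t₀ + s] one has u(t) ≤ 2·(u(t₀ − s) + u(t₀ + s)). -/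
open Set

/-!
Let `M = u(t₁)` be the maximum of `u` on `[t₀ - s, t₀ + s]`. Since `u'' ≥ -c₀ u ≥ -c₀ M`, the function
`u(t) - ½ c₀ M (t - t₀ + s)(t₀ + s - t)` is convex, so it is bounded by its larger endpoint value
`max (u(t₀ - s)) (u(t₀ + s))`. At `t₁` the correction term is at most `½ c₀ M s² ≤ M / 2`, whence
`M ≤ 2 max (u(t₀ - s)) (u(t₀ + s))`.
-/

theorem convexOn_add_mul_sub_mul_sub_of_neg_le_deriv2 {D : Set ℝ} (hD : Convex ℝ D)
    {u u' u'' : ℝ → ℝ} {K : ℝ} (hd1 : ∀ t ∈ D, HasDerivAt u (u' t) t)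
    (hd2 : ∀ t ∈ D, HasDerivAt u' (u'' t) t) (hK : ∀ t ∈ D, -K ≤ u'' t) (a b : ℝ) :
    ConvexOn ℝ D (fun t => u t + K / 2 * ((t - a) * (t - b))) := by
  have hq : ∀ t, HasDerivAt (fun t : ℝ => (t - a) * (t - b)) (2 * t - (a + b)) t := fun t =>
    (((hasDerivAt_id' t).sub_const a).mul ((hasDerivAt_id' t).sub_const b)).congr_deriv (by ring)
  have hq' : ∀ t, HasDerivAt (fun t : ℝ => 2 * t - (a + b)) 2 t := fun t =>
    (((hasDerivAt_id' t).const_mul 2).sub_const (a + b)).congr_deriv (mul_one 2)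
  have hg' : ∀ t ∈ D, HasDerivAt (fun t => u t + K / 2 * ((t - a) * (t - b)))
      (u' t + K / 2 * (2 * t - (a + b))) t := fun t ht =>
    (hd1 t ht).add ((hq t).const_mul _)
  have hg'' : ∀ t ∈ D, HasDerivAt (fun t => u' t + K / 2 * (2 * t - (a + b)))
      (u'' t + K / 2 * 2) t := fun t ht =>
    (hd2 t ht).add ((hq' t).const_mul _)
  refine convexOn_of_hasDerivWithinAt2_nonneg hD
    (fun t ht => (hg' t ht).continuousAt.continuousWithinAt)
    (fun t ht => (hg' t (interior_subset ht)).hasDerivWithinAt)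
    (fun t ht => (hg'' t (interior_subset ht)).hasDerivWithinAt) fun t ht => ?_
  linarith [hK t (interior_subset ht)]

theorem le_max_add_of_neg_le_deriv2 {u u' u'' : ℝ → ℝ} {a b K : ℝ}
    (hd1 : ∀ t ∈ Icc a b, HasDerivAt u (u' t) t) (hd2 : ∀ t ∈ Icc a b, HasDerivAt u' (u'' t) t)
    (hK : ∀ t ∈ Icc a b, -K ≤ u'' t) {t : ℝ} (ht : t ∈ Icc a b) :
    u t ≤ max (u a) (u b) + K / 2 * ((t - a) * (b - t)) := by
  have hab : a ≤ b := ht.1.trans ht.2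
  have h := (convexOn_add_mul_sub_mul_sub_of_neg_le_deriv2 (convex_Icc a b) hd1 hd2 hK a b
    ).le_max_of_mem_Icc (left_mem_Icc.2 hab) (right_mem_Icc.2 hab) ht
  simp only [sub_self, zero_mul, mul_zero, add_zero] at h
  linarith

theorem doubling_estimate_general (c₀ s t₀ : ℝ) (hc₀ : 0 ≤ c₀)
    (hcs : c₀ * s ^ 2 ≤ 1) (u u' u'' : ℝ → ℝ)
    (hu0 : ∀ t ∈ Icc (t₀ - s) (t₀ + s), 0 ≤ u t)
    (hd1 : ∀ t ∈ Icc (t₀ - s) (t₀ + s), HasDerivAt u (u' t) t)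
    (hd2 : ∀ t ∈ Icc (t₀ - s) (t₀ + s), HasDerivAt u' (u'' t) t)
    (hineq : ∀ t ∈ Icc (t₀ - s) (t₀ + s), -c₀ * u t ≤ u'' t) :
    ∀ t ∈ Icc (t₀ - s) (t₀ + s), u t ≤ 2 * (u (t₀ - s) + u (t₀ + s)) := by
  intro t ht
  have hab : t₀ - s ≤ t₀ + s := ht.1.trans ht.2
  obtain ⟨t₁, ht₁, hmax⟩ := isCompact_Icc.exists_isMaxOn ⟨t, ht⟩
    fun t ht => (hd1 t ht).continuousAt.continuousWithinAt
  have hM : 0 ≤ c₀ * u t₁ := mul_nonneg hc₀ (hu0 t₁ ht₁)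
  have hK : ∀ t ∈ Icc (t₀ - s) (t₀ + s), -(c₀ * u t₁) ≤ u'' t := fun t ht' => by
    linarith [hineq t ht', mul_le_mul_of_nonneg_left (hmax ht' : u t ≤ u t₁) hc₀]
  have hbound := le_max_add_of_neg_le_deriv2 hd1 hd2 hK ht₁
  have hquad : (t₁ - (t₀ - s)) * (t₀ + s - t₁) ≤ s ^ 2 := by nlinarith [sq_nonneg (t₁ - t₀)]
  have hcorr : c₀ * u t₁ / 2 * ((t₁ - (t₀ - s)) * (t₀ + s - t₁)) ≤ u t₁ / 2 := by
    linarith [mul_le_mul_of_nonneg_left hquad hM, mul_le_mul_of_nonneg_right hcs (hu0 t₁ ht₁)]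
  have hendpoints : max (u (t₀ - s)) (u (t₀ + s)) ≤ u (t₀ - s) + u (t₀ + s) :=
    max_le_add_of_nonneg (hu0 _ (left_mem_Icc.2 hab)) (hu0 _ (right_mem_Icc.2 hab))
  have hut : u t ≤ u t₁ := hmax ht
  linarith

/-- Doubling estimate ((IV.2.14)–(IV.2.17)): if `u ≥ 0` is twice continuously differentiable
on `[t₀ − s, t₀ + s]` with `u'' ≥ −c₀ u` there and `c₀ s² ≤ 1`, then
`u(t) ≤ 2(u(t₀ − s) + u(t₀ + s))` on the interval. -/
theorem doubling_estimate (c₀ s t₀ : ℝ) (hc₀ : 0 ≤ c₀) (hs : 0 < s)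
    (hcs : c₀ * s ^ 2 ≤ 1) (u u' u'' : ℝ → ℝ)
    (hu0 : ∀ t ∈ Icc (t₀ - s) (t₀ + s), 0 ≤ u t)
    (hd1 : ∀ t ∈ Icc (t₀ - s) (t₀ + s), HasDerivAt u (u' t) t)
    (hd2 : ∀ t ∈ Icc (t₀ - s) (t₀ + s), HasDerivAt u' (u'' t) t)
    (hc : ContinuousOn u'' (Icc (t₀ - s) (t₀ + s)))
    (hineq : ∀ t ∈ Icc (t₀ - s) (t₀ + s), -c₀ * u t ≤ u'' t) :
    ∀ t ∈ Icc (t₀ - s) (t₀ + s), u t ≤ 2 * (u (t₀ - s) + u (t₀ + s)) :=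
  doubling_estimate_general c₀ s t₀ hc₀ hcs u u' u'' hu0 hd1 hd2 hineq
end

section
/- Let λ > 0 and 0 ≤ ε ≤ λ/2, let T ∈ ℝ, and let f₊, f₋ : [T, ∞) → ℝ be nonnegative, bounded, continuously differentiable functions satisfying f₊'(t) ≤ −λ·f₊(t) + ε·f₋(t) and f₋'(t) ≥ λ·f₋(t) − ε·f₊(t) for all t ≥ T. Then for all t ≥ T one has f₋(t) ≤ (2ε/λ)·f₊(t) and f₊(t) ≤ f₊(T)·e^{−λ(t−T)/2}. -/
/-!
The combination `g = f₋ - (2ε/λ) f₊` satisfies `g' ≥ (λ/2) g`, so `g e^{-λt/2}` is nondecreasing: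
were `g` positive somewhere it would grow exponentially, contradicting boundedness. Hence
`f₋ ≤ (2ε/λ) f₊`, and substituting this into the inequality for `f₊'` gives `f₊' ≤ -(λ/2) f₊`
because `2ε²/λ ≤ λ/2`, whence the exponential decay of `f₊`.
-/

open Set Filter Real

section DifferentialInequality

variable {u u' : ℝ → ℝ} {a k : ℝ}

theorem monotoneOn_mul_exp_of_le_deriv (hd : ∀ t ∈ Ici a, HasDerivAt u (u' t) t)
    (h : ∀ t ∈ Ici a, k * u t ≤ u' t) :
    MonotoneOn (fun t => u t * exp (-k * t)) (Ici a) := by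
  have hder : ∀ t ∈ Ici a,
      HasDerivAt (fun t => u t * exp (-k * t)) ((u' t - k * u t) * exp (-k * t)) t := by
    intro t ht
    have hexp : HasDerivAt (fun t => exp (-k * t)) (exp (-k * t) * -k) t := by
      simpa using ((hasDerivAt_id t).const_mul (-k)).exp
    exact ((hd t ht).mul hexp).congr_deriv (by ring)
  refine monotoneOn_of_deriv_nonneg (convex_Ici a)
    (fun t ht => (hder t ht).continuousAt.continuousWithinAt) ?_ ?_ <;>
    rw [interior_Ici] <;> intro t ht
  · exact (hder t (mem_Ioi.1 ht).le).differentiableAt.differentiableWithinAt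
  · rw [(hder t (mem_Ioi.1 ht).le).deriv]
    exact mul_nonneg (sub_nonneg.2 (h t (mem_Ioi.1 ht).le)) (exp_pos _).le

theorem mul_exp_le_of_le_deriv (hd : ∀ t ∈ Ici a, HasDerivAt u (u' t) t)
    (h : ∀ t ∈ Ici a, k * u t ≤ u' t) {s t : ℝ} (hs : a ≤ s) (hst : s ≤ t) :
    u s * exp (k * (t - s)) ≤ u t := by
  have hmono := monotoneOn_mul_exp_of_le_deriv hd h hs (hs.trans hst) hst
  have hsplit : k * (t - s) = -k * s + k * t := by ring
  calc u s * exp (k * (t - s)) = u s * exp (-k * s) * exp (k * t) := by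
        rw [hsplit, exp_add, mul_assoc]
    _ ≤ u t * exp (-k * t) * exp (k * t) := by gcongr
    _ = u t := by rw [mul_assoc, ← exp_add, neg_mul, neg_add_cancel, exp_zero, mul_one]

theorem le_mul_exp_of_deriv_le (hd : ∀ t ∈ Ici a, HasDerivAt u (u' t) t)
    (h : ∀ t ∈ Ici a, u' t ≤ k * u t) {s t : ℝ} (hs : a ≤ s) (hst : s ≤ t) :
    u t ≤ u s * exp (k * (t - s)) := by
  simpa using mul_exp_le_of_le_deriv (u := -u) (u' := -u') (k := k)
    (fun t ht => (hd t ht).neg) (fun t ht => by simpa using h t ht) hs hst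

theorem nonpos_of_le_deriv_of_bddAbove (hk : 0 < k) (hd : ∀ t ∈ Ici a, HasDerivAt u (u' t) t)
    (h : ∀ t ∈ Ici a, k * u t ≤ u' t) (hb : BddAbove (u '' Ici a)) :
    ∀ t ∈ Ici a, u t ≤ 0 := by
  intro t₀ ht₀
  by_contra! hpos
  obtain ⟨M, hM⟩ := hb
  have hgrowth : Tendsto (fun t => u t₀ * exp (k * (t - t₀))) atTop atTop :=
    (tendsto_exp_atTop.comp ((tendsto_atTop_add_const_right _ (-t₀) tendsto_id).const_mul_atTop hk)).const_mul_atTop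
      hpos
  obtain ⟨t, hMt, ht⟩ := ((hgrowth.eventually_gt_atTop M).and (eventually_ge_atTop t₀)).exists
  have hut : u t ≤ M := hM ⟨t, ht₀.trans ht, rfl⟩
  linarith [mul_exp_le_of_le_deriv hd h ht₀ ht]

end DifferentialInequality

theorem coupled_exponential_decay_general (lam ε T : ℝ) (hlam : 0 < lam) (hε0 : 0 ≤ ε)
    (hε : ε ≤ lam / 2) (fp fm dp dm : ℝ → ℝ)
    (hfp0 : ∀ t ∈ Ici T, 0 ≤ fp t) (hfm0 : ∀ t ∈ Ici T, 0 ≤ fm t)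
    (hbdd : ∃ M : ℝ, ∀ t ∈ Ici T, fp t ≤ M ∧ fm t ≤ M)
    (hdp : ∀ t ∈ Ici T, HasDerivAt fp (dp t) t)
    (hdm : ∀ t ∈ Ici T, HasDerivAt fm (dm t) t)
    (hip : ∀ t ∈ Ici T, dp t ≤ -lam * fp t + ε * fm t)
    (him : ∀ t ∈ Ici T, lam * fm t - ε * fp t ≤ dm t) :
    ∀ t ∈ Ici T, fm t ≤ (2 * ε / lam) * fp t ∧
      fp t ≤ fp T * Real.exp (-lam * (t - T) / 2) := by
  set c := 2 * ε / lam
  have hc : 0 ≤ c := by positivity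
  have hclam : c * lam = 2 * ε := div_mul_cancel₀ _ hlam.ne'
  have hcε : c * ε ≤ lam / 2 := by
    rw [div_mul_eq_mul_div, div_le_div_iff₀ hlam two_pos]; nlinarith
  have hfm_le : ∀ t ∈ Ici T, fm t ≤ c * fp t := by
    obtain ⟨M, hM⟩ := hbdd
    have hg := nonpos_of_le_deriv_of_bddAbove (u := fun t => fm t - c * fp t)
      (half_pos hlam) (fun t ht => (hdm t ht).sub ((hdp t ht).const_mul c)) ?_ ?_
    · exact fun t ht => sub_nonpos.1 (hg t ht)
    · intro t ht
      have hcdp := mul_le_mul_of_nonneg_left (hip t ht) hc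
      nlinarith [hcdp, him t ht, mul_nonneg (sub_nonneg.2 hcε) (hfm0 t ht), hfp0 t ht]
    · refine ⟨M, ?_⟩
      rintro _ ⟨t, ht, rfl⟩
      linarith [(hM t ht).2, mul_nonneg hc (hfp0 t ht)]
  have hfp_deriv : ∀ t ∈ Ici T, dp t ≤ -(lam / 2) * fp t := by
    intro t ht
    nlinarith [hip t ht, mul_le_mul_of_nonneg_left (hfm_le t ht) hε0, hfp0 t ht]
  intro t ht
  refine ⟨hfm_le t ht, ?_⟩
  have hdecay := le_mul_exp_of_deriv_le hdp hfp_deriv le_rfl ht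
  rwa [show -(lam / 2) * (t - T) = -lam * (t - T) / 2 by ring] at hdecay

/-- Coupled differential-inequality lemma ((IV.5.2)–(IV.5.4)): if `f₊, f₋ ≥ 0` are bounded
and `C¹` on `[T, ∞)` with `f₊' ≤ −λ f₊ + ε f₋` and `f₋' ≥ λ f₋ − ε f₊` where `0 ≤ ε ≤ λ/2`,
then `f₋ ≤ (2ε/λ) f₊` and `f₊(t) ≤ f₊(T) e^{−λ(t−T)/2}` on `[T, ∞)`. -/
theorem coupled_exponential_decay (lam ε T : ℝ) (hlam : 0 < lam) (hε0 : 0 ≤ ε)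
    (hε : ε ≤ lam / 2) (fp fm dp dm : ℝ → ℝ)
    (hfp0 : ∀ t ∈ Ici T, 0 ≤ fp t) (hfm0 : ∀ t ∈ Ici T, 0 ≤ fm t)
    (hbdd : ∃ M : ℝ, ∀ t ∈ Ici T, fp t ≤ M ∧ fm t ≤ M)
    (hdp : ∀ t ∈ Ici T, HasDerivAt fp (dp t) t)
    (hdm : ∀ t ∈ Ici T, HasDerivAt fm (dm t) t)
    (hcp : ContinuousOn dp (Ici T)) (hcm : ContinuousOn dm (Ici T))
    (hip : ∀ t ∈ Ici T, dp t ≤ -lam * fp t + ε * fm t)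
    (him : ∀ t ∈ Ici T, lam * fm t - ε * fp t ≤ dm t) :
    ∀ t ∈ Ici T, fm t ≤ (2 * ε / lam) * fp t ∧
      fp t ≤ fp T * Real.exp (-lam * (t - T) / 2) :=
  coupled_exponential_decay_general lam ε T hlam hε0 hε fp fm dp dm hfp0 hfm0 hbdd hdp hdm hip him
end

section
/- Let E be a real Banach space and let B : E × E → E be a continuous bilinear map with ‖B(x, y)‖ ≤ c·‖x‖·‖y‖ for all x, y, where c > 0. Then for every φ ∈ E with ‖φ‖ ≤ 1/(8c) there exists a unique w ∈ E with ‖w‖ ≤ 1/(8c) satisfying w = −B(φ + w, φ + w); moreover this w obeys ‖w‖ ≤ 3c·‖φ‖², and if φ' is another element with ‖φ'‖ ≤ 1/(8c) and w' is the corresponding solution, then ‖w − w'‖ ≤ 3c·(‖φ‖ + ‖φ'‖)·‖φ − φ'‖. -/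
/-!
The solutions are the fixed points of `T_φ w = -B (φ + w) (φ + w)`. Since
`B a a - B b b = B a (a - b) + B (a - b) b`, on the ball of radius `r = 1/(8c)` the map `T_φ` is
`1/2`-Lipschitz in `w` and maps the ball to itself, so the contraction principle gives existence.
The same estimate applied to two solutions, for `φ` and `φ'`, gives
`‖w - w'‖ ≤ cS (‖φ - φ'‖ + ‖w - w'‖)` with `cS ≤ 1/2`, which yields uniqueness (`φ = φ'`) and the
Lipschitz bound once `‖w‖ ≤ 3c‖φ‖² ≤ (3/8)‖φ‖` is known.
-/

namespace QuadraticFixedPoint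

open Metric Set

variable {E : Type*} [NormedAddCommGroup E] {c r : ℝ}

theorem mul_norm_add_add_norm_add_le_half (hc : 0 ≤ c) (hcr : c * r ≤ 1 / 8) {x y u v : E}
    (hx : ‖x‖ ≤ r) (hy : ‖y‖ ≤ r) (hu : ‖u‖ ≤ r) (hv : ‖v‖ ≤ r) :
    c * (‖x + y‖ + ‖u + v‖) ≤ 1 / 2 := by
  have hsum : ‖x + y‖ + ‖u + v‖ ≤ 4 * r := by
    linarith [norm_add_le x y, norm_add_le u v]
  nlinarith [mul_le_mul_of_nonneg_left hsum hc]

variable [NormedSpace ℝ E] {B : E →L[ℝ] E →L[ℝ] E}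

theorem norm_apply_self_sub_apply_self_le (hB : ∀ x y : E, ‖B x y‖ ≤ c * ‖x‖ * ‖y‖) (a b : E) :
    ‖B a a - B b b‖ ≤ c * (‖a‖ + ‖b‖) * ‖a - b‖ := by
  have hsplit : B a a - B b b = B a (a - b) + B (a - b) b := by
    simp only [map_sub, sub_apply]
    abel
  calc ‖B a a - B b b‖ ≤ ‖B a (a - b)‖ + ‖B (a - b) b‖ := hsplit ▸ norm_add_le _ _
    _ ≤ c * ‖a‖ * ‖a - b‖ + c * ‖a - b‖ * ‖b‖ := add_le_add (hB _ _) (hB _ _)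
    _ = c * (‖a‖ + ‖b‖) * ‖a - b‖ := by ring

theorem norm_sub_solutions_le
    (hB : ∀ x y : E, ‖B x y‖ ≤ c * ‖x‖ * ‖y‖) (hc : 0 ≤ c) (hcr : c * r ≤ 1 / 8)
    {φ φ' w w' : E} (hφ : ‖φ‖ ≤ r) (hφ' : ‖φ'‖ ≤ r) (hw : ‖w‖ ≤ r)
    (hw' : ‖w'‖ ≤ r) (heq : w = -B (φ + w) (φ + w)) (heq' : w' = -B (φ' + w') (φ' + w')) :
    ‖w - w'‖ ≤ 2 * (c * (‖φ + w‖ + ‖φ' + w'‖)) * ‖φ - φ'‖ := by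
  set S := c * (‖φ + w‖ + ‖φ' + w'‖)
  have hS : S ≤ 1 / 2 := mul_norm_add_add_norm_add_le_half hc hcr hφ hw hφ' hw'
  have hdiff : ‖w - w'‖ ≤ S * (‖φ - φ'‖ + ‖w - w'‖) := by
    calc ‖w - w'‖ = ‖-B (φ + w) (φ + w) - -B (φ' + w') (φ' + w')‖ := by rw [← heq, ← heq']
      _ = ‖B (φ + w) (φ + w) - B (φ' + w') (φ' + w')‖ := by rw [neg_sub_neg, norm_sub_rev]
      _ ≤ S * ‖(φ + w) - (φ' + w')‖ := norm_apply_self_sub_apply_self_le hB _ _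
      _ ≤ S * (‖φ - φ'‖ + ‖w - w'‖) := by
          gcongr
          exact (congrArg norm (add_sub_add_comm φ w φ' w')).trans_le (norm_add_le _ _)
  nlinarith [norm_nonneg (w - w'), norm_nonneg (φ - φ')]

theorem norm_solution_le
    (hB : ∀ x y : E, ‖B x y‖ ≤ c * ‖x‖ * ‖y‖) (hc : 0 ≤ c) (hcr : c * r ≤ 1 / 8)
    {φ w : E} (hφ : ‖φ‖ ≤ r) (hw : ‖w‖ ≤ r) (heq : w = -B (φ + w) (φ + w)) :
    ‖w‖ ≤ 3 * c * ‖φ‖ ^ 2 := by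
  have hquad : ‖w‖ ≤ c * (‖φ‖ + ‖w‖) ^ 2 :=
    calc ‖w‖ = ‖B (φ + w) (φ + w)‖ := (congrArg norm heq).trans (norm_neg _)
      _ ≤ c * ‖φ + w‖ * ‖φ + w‖ := hB _ _
      _ ≤ c * (‖φ‖ + ‖w‖) ^ 2 := by rw [mul_assoc, ← sq]; gcongr; exact norm_add_le _ _
  have hcφ : c * ‖φ‖ ≤ 1 / 8 := (mul_le_mul_of_nonneg_left hφ hc).trans hcr
  have hcw : c * ‖w‖ ≤ 1 / 8 := (mul_le_mul_of_nonneg_left hw hc).trans hcr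
  nlinarith [norm_nonneg w, mul_le_mul_of_nonneg_right hcφ (norm_nonneg w),
    mul_le_mul_of_nonneg_right hcw (norm_nonneg w), mul_nonneg hc (sq_nonneg ‖φ‖)]

theorem norm_add_solution_le
    (hB : ∀ x y : E, ‖B x y‖ ≤ c * ‖x‖ * ‖y‖) (hc : 0 ≤ c) (hcr : c * r ≤ 1 / 8)
    {φ w : E} (hφ : ‖φ‖ ≤ r) (hw : ‖w‖ ≤ r)
    (heq : w = -B (φ + w) (φ + w)) : ‖φ + w‖ ≤ 11 / 8 * ‖φ‖ := by
  have hcφ : c * ‖φ‖ ≤ 1 / 8 := (mul_le_mul_of_nonneg_left hφ hc).trans hcr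
  have hw' : ‖w‖ ≤ 3 / 8 * ‖φ‖ := by
    nlinarith [norm_solution_le hB hc hcr hφ hw heq, mul_le_mul_of_nonneg_right hcφ (norm_nonneg φ)]
  linarith [norm_add_le φ w]

theorem exists_solution [CompleteSpace E]
    (hB : ∀ x y : E, ‖B x y‖ ≤ c * ‖x‖ * ‖y‖) (hc : 0 ≤ c) (hcr : c * r ≤ 1 / 8)
    {φ : E} (hφ : ‖φ‖ ≤ r) :
    ∃ w, ‖w‖ ≤ r ∧ w = -B (φ + w) (φ + w) := by
  set T : E → E := fun w ↦ -B (φ + w) (φ + w)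
  have hmaps : MapsTo T (closedBall 0 r) (closedBall 0 r) := by
    intro w hw
    rw [mem_closedBall_zero_iff] at hw ⊢
    have hr : 0 ≤ r := (norm_nonneg φ).trans hφ
    have hsum : ‖φ + w‖ ≤ 2 * r := by linarith [norm_add_le φ w]
    calc ‖T w‖ = ‖B (φ + w) (φ + w)‖ := norm_neg _
      _ ≤ c * ‖φ + w‖ * ‖φ + w‖ := hB _ _
      _ ≤ c * (2 * r) * (2 * r) := by gcongr
      _ ≤ r := by nlinarith
  have hlip : LipschitzOnWith 2⁻¹ T (closedBall 0 r) := by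
    refine LipschitzOnWith.of_dist_le_mul fun w hw w' hw' ↦ ?_
    rw [mem_closedBall_zero_iff] at hw hw'
    have hS := mul_norm_add_add_norm_add_le_half hc hcr hφ hw hφ hw'
    calc dist (T w) (T w') = ‖B (φ + w') (φ + w') - B (φ + w) (φ + w)‖ := by
          rw [dist_eq_norm]; exact congrArg norm (neg_sub_neg _ _)
      _ ≤ c * (‖φ + w'‖ + ‖φ + w‖) * ‖(φ + w') - (φ + w)‖ :=
          norm_apply_self_sub_apply_self_le hB _ _
      _ ≤ 2⁻¹ * dist w w' := by
          rw [add_sub_add_left_eq_sub, dist_eq_norm', add_comm (‖φ + w'‖)]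
          gcongr
          linarith
  obtain ⟨w, hw, hfix, -⟩ := ContractingWith.exists_fixedPoint' isClosed_closedBall.isComplete
    hmaps ⟨by norm_num, hlip.mapsToRestrict hmaps⟩ (mem_closedBall_self ((norm_nonneg φ).trans hφ))
    (edist_ne_top _ _)
  exact ⟨w, mem_closedBall_zero_iff.mp hw, hfix.symm⟩

end QuadraticFixedPoint

open QuadraticFixedPoint in
/-- Abstract quadratic fixed-point lemma (Lemma IV.3.3): for a continuous bilinear map `B`
on a Banach space with `‖B(x,y)‖ ≤ c‖x‖‖y‖`, every `φ` with `‖φ‖ ≤ 1/(8c)` admits a unique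
`w` with `‖w‖ ≤ 1/(8c)` and `w = −B(φ+w, φ+w)`; moreover `‖w‖ ≤ 3c‖φ‖²` and the solution
map is Lipschitz: `‖w − w'‖ ≤ 3c(‖φ‖+‖φ'‖)‖φ − φ'‖`. -/
theorem quadratic_fixed_point {E : Type*} [NormedAddCommGroup E] [NormedSpace ℝ E]
    [CompleteSpace E] (c : ℝ) (hc : 0 < c) (B : E →L[ℝ] E →L[ℝ] E)
    (hB : ∀ x y : E, ‖B x y‖ ≤ c * ‖x‖ * ‖y‖) :
    ∀ φ : E, ‖φ‖ ≤ 1 / (8 * c) →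
      (∃! w : E, ‖w‖ ≤ 1 / (8 * c) ∧ w = -B (φ + w) (φ + w)) ∧
      ∀ w : E, ‖w‖ ≤ 1 / (8 * c) → w = -B (φ + w) (φ + w) →
        ‖w‖ ≤ 3 * c * ‖φ‖ ^ 2 ∧
        ∀ φ' w' : E, ‖φ'‖ ≤ 1 / (8 * c) → ‖w'‖ ≤ 1 / (8 * c) →
          w' = -B (φ' + w') (φ' + w') →
          ‖w - w'‖ ≤ 3 * c * (‖φ‖ + ‖φ'‖) * ‖φ - φ'‖ := by
  have hcr : c * (1 / (8 * c)) ≤ 1 / 8 := (by field_simp : c * (1 / (8 * c)) = 1 / 8).le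
  intro φ hφ
  obtain ⟨w, hw, heq⟩ := exists_solution hB hc.le hcr hφ
  refine ⟨⟨w, ⟨hw, heq⟩, fun w' ⟨hw', heq'⟩ ↦ ?_⟩,
    fun w hw heq ↦ ⟨norm_solution_le hB hc.le hcr hφ hw heq, fun φ' w' hφ' hw' heq' ↦ ?_⟩⟩
  · have h := norm_sub_solutions_le hB hc.le hcr hφ hφ hw' hw heq' heq
    rw [sub_self, norm_zero, mul_zero] at h
    exact sub_eq_zero.mp (norm_le_zero_iff.mp h)
  · have h := norm_sub_solutions_le hB hc.le hcr hφ hφ' hw hw' heq heq'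
    have hS := add_le_add (norm_add_solution_le hB hc.le hcr hφ hw heq)
      (norm_add_solution_le hB hc.le hcr hφ' hw' heq')
    calc ‖w - w'‖ ≤ 2 * (c * (‖φ + w‖ + ‖φ' + w'‖)) * ‖φ - φ'‖ := h
      _ ≤ 2 * (c * (11 / 8 * ‖φ‖ + 11 / 8 * ‖φ'‖)) * ‖φ - φ'‖ := by gcongr
      _ ≤ 3 * c * (‖φ‖ + ‖φ'‖) * ‖φ - φ'‖ := by
        have : 0 ≤ c * (‖φ‖ + ‖φ'‖) * ‖φ - φ'‖ := by positivity
        linarith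
end
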